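/- arXiv:2007.13868 — 4 statements merged into one kernel-verified Lean document; each statement's English description precedes it below -/
import Mathlib

section
/- The m-th factorial moment of the distribution of the number of chords contained within the marked chord, in a uniformly random marked linear chord diagram on 2n vertices, equals ((n-1)!/(n-m-1)!) · 1/((m+1)(2m+1)) for 0 ≤ m ≤ n-1. In particular the mean is (n-1)/6 and the variance is (n-1)(7n+11)/180. -/
open scoped BigOperators

/-- A marked linear chord diagram on `2n` vertices: a fixed-point-free involution
(perfect matching) of `Fin (2*n)` together with a distinguished chord, represented
by its left endpoint `a` (so the chord is `{a, f a}` with `a < f a`). -/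
def MarkedDiagram (n : ℕ) : Type :=
  {fa : (Fin (2*n) → Fin (2*n)) × Fin (2*n) //
    (∀ x, fa.1 (fa.1 x) = x) ∧ (∀ x, fa.1 x ≠ x) ∧ fa.2 < fa.1 fa.2}

instance (n : ℕ) : Fintype (MarkedDiagram n) := by
  unfold MarkedDiagram; infer_instance

instance (n : ℕ) : DecidableEq (MarkedDiagram n) := by
  unfold MarkedDiagram; infer_instance

namespace MarkedDiagram

variable {n : ℕ}

/-- The matching. -/
def f (D : MarkedDiagram n) : Fin (2*n) → Fin (2*n) := D.1.1

/-- Left endpoint of the marked chord. -/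
def a (D : MarkedDiagram n) : Fin (2*n) := D.1.2

/-- Right endpoint of the marked chord. -/
def b (D : MarkedDiagram n) : Fin (2*n) := D.1.1 D.1.2

/-- The size of the marked chord: the number of vertices strictly between its endpoints. -/
def size (D : MarkedDiagram n) : ℕ := (D.b : ℕ) - (D.a : ℕ) - 1

/-- Number of chords crossing the marked chord (exactly one endpoint strictly between
the endpoints of the marked chord); each chord is counted via its left endpoint `c < f c`. -/
def crossCount (D : MarkedDiagram n) : ℕ :=
  (Finset.univ.filter (fun c : Fin (2*n) =>
    c < D.f c ∧ Xor (D.a < c ∧ c < D.b) (D.a < D.f c ∧ D.f c < D.b))).card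

/-- Number of chords contained within the marked chord (both endpoints strictly between
the endpoints of the marked chord). -/
def containedCount (D : MarkedDiagram n) : ℕ :=
  (Finset.univ.filter (fun c : Fin (2*n) =>
    c < D.f c ∧ D.a < c ∧ D.f c < D.b)).card

/-- Number of chords containing the marked chord. -/
def containingCount (D : MarkedDiagram n) : ℕ :=
  (Finset.univ.filter (fun c : Fin (2*n) =>
    c < D.f c ∧ c < D.a ∧ D.b < D.f c)).card

/-- Number of chords excluded by the marked chord (both endpoints to the left, or both
to the right, of the marked chord). -/
def excludedCount (D : MarkedDiagram n) : ℕ :=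
  (Finset.univ.filter (fun c : Fin (2*n) =>
    c < D.f c ∧ (D.f c < D.a ∨ D.b < c))).card

end MarkedDiagram

/-- `K n p`: number of marked diagrams whose marked chord is crossed by exactly `p` chords. -/
def Kcount (n p : ℕ) : ℕ := Fintype.card {D : MarkedDiagram n // D.crossCount = p}

/-- `C n p`: number of marked diagrams whose marked chord contains exactly `p` chords. -/
def Ccount (n p : ℕ) : ℕ := Fintype.card {D : MarkedDiagram n // D.containedCount = p}

/-- `G n p`: number of marked diagrams whose marked chord is contained in exactly `p` chords. -/
def Gcount (n p : ℕ) : ℕ := Fintype.card {D : MarkedDiagram n // D.containingCount = p}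

/-- `X n p`: number of marked diagrams with exactly `p` chords excluded by the marked chord. -/
def Xcount (n p : ℕ) : ℕ := Fintype.card {D : MarkedDiagram n // D.excludedCount = p}


open Finset

/-- Recursive count of perfect matchings on `k` points. -/
def matchNum : ℕ → ℕ
  | 0 => 1
  | 1 => 0
  | (k+2) => (k+1) * matchNum k

lemma matchNum_step : ∀ k : ℕ, 1 ≤ k → matchNum k = (k - 1) * matchNum (k - 2)
  | 1, _ => by simp [matchNum]
  | (k+2), _ => by simp [matchNum]

/-- A fixed-point-free involution. -/
def IsMatching {α : Type*} (f : α → α) : Prop := (∀ x, f (f x) = x) ∧ ∀ x, f x ≠ x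

instance {α : Type*} [Fintype α] [DecidableEq α] : DecidablePred (IsMatching (α := α)) := by
  intro f; unfold IsMatching; infer_instance

section Extend

open scoped Classical

variable {α β : Type*} [DecidableEq α]

/-- Glue a matching on the complement of the points `x j`, `y j` with the
prescribed pairs `{x j, y j}`. -/
noncomputable def glue (x y : β → α)
    (g : {z : α // (∀ j, z ≠ x j) ∧ (∀ j, z ≠ y j)} → {z : α // (∀ j, z ≠ x j) ∧ (∀ j, z ≠ y j)})
    (z : α) : α :=
  if h : ∃ j, x j = z then y h.choose
  else if h' : ∃ j, y j = z then x h'.choose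
  else if h'' : (∀ j, z ≠ x j) ∧ (∀ j, z ≠ y j) then (g ⟨z, h''⟩).1 else z

lemma glue_x (x y : β → α) (hx : Function.Injective x) (g) (j : β) :
    glue x y g (x j) = y j := by
  classical
  have h : ∃ j', x j' = x j := ⟨j, rfl⟩
  rw [glue, dif_pos h, hx h.choose_spec]

lemma glue_y (x y : β → α) (hy : Function.Injective y) (hxy : ∀ i j, x i ≠ y j) (g) (j : β) :
    glue x y g (y j) = x j := by
  classical
  have h : ¬ ∃ j', x j' = y j := by rintro ⟨j', hj'⟩; exact hxy j' j hj'
  have h' : ∃ j', y j' = y j := ⟨j, rfl⟩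
  rw [glue, dif_neg h, dif_pos h', hy h'.choose_spec]

lemma glue_comp (x y : β → α) (g) (z : α) (hz : (∀ j, z ≠ x j) ∧ (∀ j, z ≠ y j)) :
    glue x y g z = (g ⟨z, hz⟩).1 := by
  classical
  have h : ¬ ∃ j, x j = z := by rintro ⟨j, hj⟩; exact hz.1 j hj.symm
  have h' : ¬ ∃ j, y j = z := by rintro ⟨j, hj⟩; exact hz.2 j hj.symm
  rw [glue, dif_neg h, dif_neg h', dif_pos hz]

lemma glue_eq_of (x y : β → α) (hx : Function.Injective x) (hy : Function.Injective y)
    (hxy : ∀ i j, x i ≠ y j) (g) (f : α → α)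
    (hg : ∀ w, (g w).1 = f w.1) (hfx : ∀ j, f (x j) = y j) (hfy : ∀ j, f (y j) = x j) :
    glue x y g = f := by
  funext z
  by_cases h : ∃ j, x j = z
  · obtain ⟨j, rfl⟩ := h
    rw [glue_x x y hx, hfx]
  by_cases h' : ∃ j, y j = z
  · obtain ⟨j, rfl⟩ := h'
    rw [glue_y x y hy hxy, hfy]
  have hz : (∀ j, z ≠ x j) ∧ (∀ j, z ≠ y j) :=
    ⟨fun j hj => h ⟨j, hj.symm⟩, fun j hj => h' ⟨j, hj.symm⟩⟩
  rw [glue_comp x y g z hz, hg]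

/-- Matchings extending a prescribed partial pairing correspond to matchings of the
complement of the prescribed points. -/
noncomputable def matchingExtendEquiv (x y : β → α) (hx : Function.Injective x)
    (hy : Function.Injective y) (hxy : ∀ i j, x i ≠ y j) :
    {f : α → α // IsMatching f ∧ ∀ j, f (x j) = y j} ≃
      {g : {z : α // (∀ j, z ≠ x j) ∧ (∀ j, z ≠ y j)} →
          {z : α // (∀ j, z ≠ x j) ∧ (∀ j, z ≠ y j)} // IsMatching g} where
  toFun f := by
    refine ⟨fun z => ⟨f.1 z.1, ?_, ?_⟩, ?_, ?_⟩
    · intro j hj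
      have h2 : f.1 (f.1 z.1) = z.1 := f.2.1.1 _
      rw [hj, f.2.2 j] at h2
      exact z.2.2 j h2.symm
    · intro j hj
      have h2 : f.1 (f.1 z.1) = z.1 := f.2.1.1 _
      rw [hj] at h2
      have h3 : f.1 (y j) = x j := by rw [← f.2.2 j, f.2.1.1]
      rw [h3] at h2
      exact z.2.1 j h2.symm
    · intro z; exact Subtype.ext (f.2.1.1 z.1)
    · intro z hz; exact f.2.1.2 z.1 (congrArg Subtype.val hz)
  invFun g := by
    refine ⟨glue x y g.1, ⟨?_, ?_⟩, fun j => glue_x x y hx g.1 j⟩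
    · intro z
      by_cases h : ∃ j, x j = z
      · obtain ⟨j, rfl⟩ := h
        rw [glue_x x y hx, glue_y x y hy hxy]
      by_cases h' : ∃ j, y j = z
      · obtain ⟨j, rfl⟩ := h'
        rw [glue_y x y hy hxy, glue_x x y hx]
      have hz : (∀ j, z ≠ x j) ∧ (∀ j, z ≠ y j) :=
        ⟨fun j hj => h ⟨j, hj.symm⟩, fun j hj => h' ⟨j, hj.symm⟩⟩
      rw [glue_comp x y g.1 z hz, glue_comp x y g.1 _ (g.1 ⟨z, hz⟩).2]
      have := congrArg Subtype.val (g.2.1 ⟨z, hz⟩)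
      simpa using this
    · intro z
      by_cases h : ∃ j, x j = z
      · obtain ⟨j, rfl⟩ := h
        rw [glue_x x y hx]; exact fun hc => hxy j j hc.symm
      by_cases h' : ∃ j, y j = z
      · obtain ⟨j, rfl⟩ := h'
        rw [glue_y x y hy hxy]; exact fun hc => hxy j j hc
      have hz : (∀ j, z ≠ x j) ∧ (∀ j, z ≠ y j) :=
        ⟨fun j hj => h ⟨j, hj.symm⟩, fun j hj => h' ⟨j, hj.symm⟩⟩
      rw [glue_comp x y g.1 z hz]
      intro hc
      exact g.2.2 ⟨z, hz⟩ (Subtype.ext hc)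
  left_inv f := by
    apply Subtype.ext
    refine glue_eq_of x y hx hy hxy _ f.1 (fun w => rfl) f.2.2 ?_
    intro j
    rw [← f.2.2 j, f.2.1.1]
  right_inv g := by
    apply Subtype.ext
    funext z
    apply Subtype.ext
    show glue x y g.1 z.1 = (g.1 z).1
    rw [glue_comp x y g.1 z.1 z.2]

end Extend

section Count

open scoped Classical

lemma card_compSub {α β : Type*} [Fintype α] [DecidableEq α] [Fintype β]
    (x y : β → α) (hx : Function.Injective x) (hy : Function.Injective y)
    (hxy : ∀ i j, x i ≠ y j) :
    Fintype.card {z : α // (∀ j, z ≠ x j) ∧ (∀ j, z ≠ y j)}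
      = Fintype.card α - 2 * Fintype.card β := by
  rw [Fintype.card_subtype]
  have h1 : Finset.univ.filter (fun z : α => (∀ j, z ≠ x j) ∧ (∀ j, z ≠ y j))
      = Finset.univ \ (Finset.univ.image x ∪ Finset.univ.image y) := by
    ext z
    constructor
    · intro hz
      rw [Finset.mem_filter] at hz
      rw [Finset.mem_sdiff]
      refine ⟨Finset.mem_univ z, ?_⟩
      intro hmem
      rcases Finset.mem_union.mp hmem with h | h
      · obtain ⟨j, -, hj⟩ := Finset.mem_image.mp h
        exact hz.2.1 j hj.symm
      · obtain ⟨j, -, hj⟩ := Finset.mem_image.mp h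
        exact hz.2.2 j hj.symm
    · intro hz
      rw [Finset.mem_sdiff] at hz
      rw [Finset.mem_filter]
      refine ⟨Finset.mem_univ z, fun j hj => ?_, fun j hj => ?_⟩
      · exact hz.2 (Finset.mem_union_left _ (Finset.mem_image.mpr ⟨j, Finset.mem_univ j, hj.symm⟩))
      · exact hz.2 (Finset.mem_union_right _ (Finset.mem_image.mpr ⟨j, Finset.mem_univ j, hj.symm⟩))
  rw [h1, Finset.card_sdiff_of_subset (Finset.subset_univ _), Finset.card_union_of_disjoint,
    Finset.card_image_of_injective _ hx, Finset.card_image_of_injective _ hy,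
    Finset.card_univ]
  · rw [Finset.card_univ]
    omega
  · rw [Finset.disjoint_left]
    rintro z hz hz'
    simp only [Finset.mem_image] at hz hz'
    obtain ⟨i, _, rfl⟩ := hz
    obtain ⟨j, _, hj⟩ := hz'
    exact hxy i j hj.symm

lemma card_matching_aux :
    ∀ (k : ℕ) (α : Type) [Fintype α] [DecidableEq α], Fintype.card α = k →
      Fintype.card {f : α → α // IsMatching f} = matchNum k := by
  intro k
  induction k using Nat.strong_induction_on with
  | _ k ih =>
    intro α _ _ hk
    rcases Nat.eq_zero_or_pos k with hk0 | hkpos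
    · subst hk0
      haveI : IsEmpty α := Fintype.card_eq_zero_iff.mp hk
      have hall : ∀ f : α → α, IsMatching f :=
        fun f => ⟨fun x => isEmptyElim x, fun x => isEmptyElim x⟩
      rw [Fintype.card_congr (Equiv.subtypeUnivEquiv hall)]
      simp [matchNum]
    obtain ⟨x⟩ : Nonempty α := Fintype.card_pos_iff.mp (hk ▸ hkpos)
    have h1 : Fintype.card {f : α → α // IsMatching f}
        = ∑ z : α, Fintype.card {f : {f : α → α // IsMatching f} // f.1 x = z} := by
      rw [← Fintype.card_sigma]
      exact (Fintype.card_congr (Equiv.sigmaFiberEquiv (fun f : {f : α → α // IsMatching f} => f.1 x))).symm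
    have h2 : ∀ z : α, z ≠ x →
        Fintype.card {f : {f : α → α // IsMatching f} // f.1 x = z} = matchNum (k - 2) := by
      intro z hz
      have e1 : {f : {f : α → α // IsMatching f} // f.1 x = z}
          ≃ {f : α → α // IsMatching f ∧ ∀ _ : Unit, f x = z} := by
        refine (Equiv.subtypeSubtypeEquivSubtypeInter
          (fun f : α → α => IsMatching f) (fun f => f x = z)).trans (Equiv.subtypeEquivRight ?_)
        intro f; constructor
        · rintro ⟨h, h'⟩; exact ⟨h, fun _ => h'⟩
        · rintro ⟨h, h'⟩; exact ⟨h, h' Unit.unit⟩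
      have hxinj : Function.Injective (fun _ : Unit => x) := fun a b _ => rfl
      have hzinj : Function.Injective (fun _ : Unit => z) := fun a b _ => rfl
      have hxz : ∀ i j : Unit, (fun _ : Unit => x) i ≠ (fun _ : Unit => z) j :=
        fun _ _ h => hz h.symm
      rw [Fintype.card_congr e1,
        Fintype.card_congr (matchingExtendEquiv (fun _ : Unit => x) (fun _ => z) hxinj hzinj hxz)]
      have hcard := card_compSub (fun _ : Unit => x) (fun _ => z) hxinj hzinj hxz
      rw [ih (k - 2) (by omega) _ (by rw [hcard, hk]; simp)]
    have h3 : Fintype.card {f : {f : α → α // IsMatching f} // f.1 x = x} = 0 := by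
      rw [Fintype.card_eq_zero_iff]
      constructor
      rintro ⟨⟨f, hf⟩, hfx⟩
      exact hf.2 x hfx
    rw [h1, ← Finset.sum_erase_add _ _ (Finset.mem_univ x), h3, add_zero,
      Finset.sum_congr rfl (fun z hz => h2 z (Finset.ne_of_mem_erase hz)),
      Finset.sum_const, Finset.card_erase_of_mem (Finset.mem_univ x), Finset.card_univ, hk,
      smul_eq_mul, ← matchNum_step k hkpos]

lemma card_matching (α : Type) [Fintype α] [DecidableEq α] :
    Fintype.card {f : α → α // IsMatching f} = matchNum (Fintype.card α) :=
  card_matching_aux _ α rfl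

lemma card_matching_extend {α β : Type} [Fintype α] [DecidableEq α] [Fintype β]
    (x y : β → α) (hx : Function.Injective x) (hy : Function.Injective y)
    (hxy : ∀ i j, x i ≠ y j) :
    Fintype.card {f : α → α // IsMatching f ∧ ∀ j, f (x j) = y j}
      = matchNum (Fintype.card α - 2 * Fintype.card β) := by
  rw [Fintype.card_congr (matchingExtendEquiv x y hx hy hxy), card_matching,
    card_compSub x y hx hy hxy]

end Count

section Diagram

variable {n m : ℕ}

lemma MarkedDiagram.f_invol (D : MarkedDiagram n) : ∀ x, D.f (D.f x) = x := D.2.1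
lemma MarkedDiagram.f_ne (D : MarkedDiagram n) : ∀ x, D.f x ≠ x := D.2.2.1
lemma MarkedDiagram.a_lt_b (D : MarkedDiagram n) : D.a < D.b := D.2.2.2

/-- The set of left endpoints of chords contained in the marked chord. -/
abbrev CSub (D : MarkedDiagram n) : Type :=
  {c : Fin (2*n) // c < D.f c ∧ D.a < c ∧ D.f c < D.b}

lemma card_CSub (D : MarkedDiagram n) : Fintype.card (CSub D) = D.containedCount := by
  rw [Fintype.card_subtype]
  rfl

lemma containedCount_lt (D : MarkedDiagram n) : D.containedCount < n := by
  have hL : ∀ inst : DecidablePred (fun c : Fin (2*n) => c < D.f c),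
      (@Finset.filter _ (fun c : Fin (2*n) => c < D.f c) inst Finset.univ).card = n := by
    intro inst
    have h1 : (Finset.univ.filter (fun c : Fin (2*n) => c < D.f c)).card
        = (Finset.univ.filter (fun c : Fin (2*n) => D.f c < c)).card := by
      apply Finset.card_bij (fun c _ => D.f c)
      · intro c hc
        simp only [Finset.mem_filter, Finset.mem_univ, true_and] at hc ⊢
        rw [D.f_invol c]; exact hc
      · intro c hc c' hc' h
        have h2 := congrArg D.f h
        rwa [D.f_invol, D.f_invol] at h2
      · intro c hc
        simp only [Finset.mem_filter, Finset.mem_univ, true_and] at hc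
        refine ⟨D.f c, ?_, D.f_invol c⟩
        simp only [Finset.mem_filter, Finset.mem_univ, true_and]
        rw [D.f_invol]; exact hc
    have h2 : (Finset.univ.filter (fun c : Fin (2*n) => c < D.f c)).card
        + (Finset.univ.filter (fun c : Fin (2*n) => D.f c < c)).card = 2*n := by
      have h3 : (Finset.univ.filter (fun c : Fin (2*n) => D.f c < c))
          = (Finset.univ.filter (fun c : Fin (2*n) => ¬ c < D.f c)) := by
        apply Finset.filter_congr
        intro c _
        constructor
        · intro h; exact not_lt_of_gt h
        · intro h; exact lt_of_le_of_ne (not_lt.mp h) (D.f_ne c)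
      rw [h3, Finset.card_filter_add_card_filter_not, Finset.card_univ, Fintype.card_fin]
    rw [Finset.filter_congr_decidable]
    omega
  have haL : D.a ∈ Finset.univ.filter (fun c : Fin (2*n) => c < D.f c) := by
    simp only [Finset.mem_filter, Finset.mem_univ, true_and]
    exact D.a_lt_b
  have hsub : Finset.univ.filter (fun c : Fin (2*n) => c < D.f c ∧ D.a < c ∧ D.f c < D.b)
      ⊆ (Finset.univ.filter (fun c : Fin (2*n) => c < D.f c)).erase D.a := by
    intro c hc
    simp only [Finset.mem_filter, Finset.mem_univ, true_and] at hc
    refine Finset.mem_erase.mpr ⟨(hc.2.1).ne', ?_⟩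
    simp only [Finset.mem_filter, Finset.mem_univ, true_and]
    exact hc.1
  have hcard := Finset.card_le_card hsub
  rw [Finset.card_erase_of_mem haL, hL _] at hcard
  have hn : 1 ≤ n := by
    have := D.a.pos
    omega
  have hcc : D.containedCount
      = (Finset.univ.filter (fun c : Fin (2*n) => c < D.f c ∧ D.a < c ∧ D.f c < D.b)).card := rfl
  omega

lemma sum_descFactorial_Ccount (n m : ℕ) :
    ∑ p ∈ Finset.range n, Nat.descFactorial p m * Ccount n p
      = Fintype.card (Σ D : MarkedDiagram n, (Fin m ↪ CSub D)) := by
  rw [Fintype.card_sigma]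
  have h1 : ∀ D : MarkedDiagram n,
      Fintype.card (Fin m ↪ CSub D) = Nat.descFactorial D.containedCount m := by
    intro D
    rw [Fintype.card_embedding_eq, Fintype.card_fin, card_CSub]
  rw [Finset.sum_congr rfl (fun D _ => h1 D)]
  rw [← Finset.sum_fiberwise_of_maps_to
    (fun (D : MarkedDiagram n) _ => Finset.mem_range.mpr (containedCount_lt D))
    (fun D => Nat.descFactorial D.containedCount m)]
  refine Finset.sum_congr rfl fun p _ => ?_
  have h2 : Ccount n p
      = (Finset.univ.filter (fun D : MarkedDiagram n => D.containedCount = p)).card := by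
    rw [Ccount, Fintype.card_subtype]
  rw [h2]
  rw [Finset.sum_congr rfl (fun D hD => by rw [(Finset.mem_filter.mp hD).2])]
  rw [Finset.sum_const, smul_eq_mul, mul_comm]

end Diagram

section Bij

/-- Tuples `(a, b, c, d)`: endpoints of the marked chord and of `m` ordered chords
strictly inside it. -/
abbrev QT (n m : ℕ) : Type :=
  {q : (Fin (2*n) × Fin (2*n)) × (Fin m → Fin (2*n)) × (Fin m → Fin (2*n)) //
    q.1.1 < q.1.2 ∧ (∀ i, q.1.1 < q.2.1 i ∧ q.2.1 i < q.2.2 i ∧ q.2.2 i < q.1.2) ∧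
    Function.Injective q.2.1 ∧ Function.Injective q.2.2 ∧ ∀ i j, q.2.1 i ≠ q.2.2 j}

/-- Matchings extending the partial pairing prescribed by a tuple. -/
abbrev ExtM {n m : ℕ} (q : QT n m) : Type :=
  {f : Fin (2*n) → Fin (2*n) // IsMatching f ∧ f q.1.1.1 = q.1.1.2 ∧
    ∀ i, f (q.1.2.1 i) = q.1.2.2 i}

def toT {n m : ℕ} (x : Σ q : QT n m, ExtM q) : Σ D : MarkedDiagram n, (Fin m ↪ CSub D) := by
  refine ⟨⟨(x.2.1, x.1.1.1.1), x.2.2.1.1, x.2.2.1.2, ?_⟩,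
    ⟨fun i => ⟨x.1.1.2.1 i, ?_, ?_, ?_⟩, ?_⟩⟩
  · show x.1.1.1.1 < x.2.1 x.1.1.1.1
    rw [x.2.2.2.1]
    exact x.1.2.1
  · show x.1.1.2.1 i < x.2.1 (x.1.1.2.1 i)
    rw [x.2.2.2.2 i]
    exact (x.1.2.2.1 i).2.1
  · exact (x.1.2.2.1 i).1
  · show x.2.1 (x.1.1.2.1 i) < x.2.1 x.1.1.1.1
    rw [x.2.2.2.2 i, x.2.2.2.1]
    exact (x.1.2.2.1 i).2.2
  · intro i j h
    exact x.1.2.2.2.1 (congrArg Subtype.val h)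

lemma toT_bijective (n m : ℕ) : Function.Bijective (toT (n := n) (m := m)) := by
  constructor
  · rintro ⟨q1, f1⟩ ⟨q2, f2⟩ h
    have hf : f1.1 = f2.1 := congrArg (fun t : Σ D : MarkedDiagram n, (Fin m ↪ CSub D) => t.1.1.1) h
    have ha : q1.1.1.1 = q2.1.1.1 := congrArg (fun t : Σ D : MarkedDiagram n, (Fin m ↪ CSub D) => t.1.1.2) h
    have hc : ∀ i, q1.1.2.1 i = q2.1.2.1 i :=
      fun i => congrArg (fun t : Σ D : MarkedDiagram n, (Fin m ↪ CSub D) => (t.2 i).1) h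
    have hb : q1.1.1.2 = q2.1.1.2 := by
      rw [← f1.2.2.1, ← f2.2.2.1, hf, ha]
    have hd : ∀ i, q1.1.2.2 i = q2.1.2.2 i := by
      intro i
      rw [← f1.2.2.2 i, ← f2.2.2.2 i, hf, hc i]
    have hq : q1 = q2 := Subtype.ext (Prod.ext (Prod.ext ha hb) (Prod.ext (funext hc) (funext hd)))
    subst hq
    exact congrArg (Sigma.mk q1) (Subtype.ext hf)
  · rintro ⟨D, g⟩
    have habD : D.a < D.b := D.a_lt_b
    refine ⟨⟨⟨((D.a, D.b), (fun i => (g i).1, fun i => D.f (g i).1)), ?_, ?_, ?_, ?_, ?_⟩,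
      ⟨D.f, ⟨D.2.1, D.2.2.1⟩, rfl, fun i => rfl⟩⟩, ?_⟩
    · exact habD
    · intro i
      exact ⟨(g i).2.2.1, (g i).2.1, (g i).2.2.2⟩
    · intro i j hij
      exact g.injective (Subtype.ext hij)
    · intro i j hij
      have h2 := congrArg D.f hij
      rw [D.f_invol, D.f_invol] at h2
      exact g.injective (Subtype.ext h2)
    · intro i j hij
      have hij' : ((g i : Fin (2*n))) = D.f (g j) := hij
      have h1 : (g i).1 < D.f (g i).1 := (g i).2.1
      have h2 : (g j).1 < D.f (g j).1 := (g j).2.1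
      rw [hij', D.f_invol] at h1
      exact absurd h2 (not_lt_of_gt h1)
    · rfl

lemma card_ExtMM {n m : ℕ} (q : QT n m) :
    Fintype.card (ExtM q) = matchNum (2*n - 2*(m+1)) := by
  have e1 : ExtM q ≃ {f : Fin (2*n) → Fin (2*n) // IsMatching f ∧
      ∀ j : Option (Fin m), f (j.elim q.1.1.1 q.1.2.1) = j.elim q.1.1.2 q.1.2.2} := by
    apply Equiv.subtypeEquivRight
    intro f
    constructor
    · rintro ⟨hm, h1, h2⟩
      refine ⟨hm, ?_⟩
      rintro (_ | i)
      · exact h1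
      · exact h2 i
    · rintro ⟨hm, h⟩
      exact ⟨hm, h none, fun i => h (some i)⟩
  have hxinj : Function.Injective (fun j : Option (Fin m) => j.elim q.1.1.1 q.1.2.1) := by
    rintro (_ | i) (_ | j) h
    · rfl
    · exact absurd h.symm (ne_of_gt (q.2.2.1 j).1)
    · exact absurd h (ne_of_gt (q.2.2.1 i).1)
    · exact congrArg some (q.2.2.2.1 h)
  have hyinj : Function.Injective (fun j : Option (Fin m) => j.elim q.1.1.2 q.1.2.2) := by
    rintro (_ | i) (_ | j) h
    · rfl
    · exact absurd h.symm (ne_of_lt (q.2.2.1 j).2.2)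
    · exact absurd h (ne_of_lt (q.2.2.1 i).2.2)
    · exact congrArg some (q.2.2.2.2.1 h)
  have hxy : ∀ i j : Option (Fin m),
      (fun j : Option (Fin m) => j.elim q.1.1.1 q.1.2.1) i
        ≠ (fun j : Option (Fin m) => j.elim q.1.1.2 q.1.2.2) j := by
    rintro (_ | i) (_ | j) h
    · exact absurd h (ne_of_lt q.2.1)
    · exact absurd h (ne_of_lt (lt_trans (q.2.2.1 j).1 (q.2.2.1 j).2.1))
    · exact absurd h (ne_of_lt (lt_trans (q.2.2.1 i).2.1 (q.2.2.1 i).2.2))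
    · exact q.2.2.2.2.2 i j h
  rw [Fintype.card_congr e1, card_matching_extend _ _ hxinj hyinj hxy]
  congr 1
  simp [Fintype.card_option]

lemma card_T (n m : ℕ) :
    Fintype.card (Σ D : MarkedDiagram n, (Fin m ↪ CSub D))
      = Fintype.card (QT n m) * matchNum (2*n - 2*(m+1)) := by
  rw [← Fintype.card_congr (Equiv.ofBijective _ (toT_bijective n m)), Fintype.card_sigma]
  rw [Finset.sum_congr rfl (fun q _ => card_ExtMM q), Finset.sum_const, Finset.card_univ,
    smul_eq_mul]

end Bij

section CountQT

variable {n m : ℕ}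

/-- Tuples `(a, b, u)` with `u` an injective family of `2m` points strictly between
`a` and `b`. -/
abbrev WT (n m : ℕ) : Type :=
  {w : (Fin (2*n) × Fin (2*n)) × (Fin m × Bool → Fin (2*n)) //
    w.1.1 < w.1.2 ∧ Function.Injective w.2 ∧ ∀ p, w.1.1 < w.2 p ∧ w.2 p < w.1.2}

def pairEquiv (n m : ℕ) : QT n m × (Fin m → Bool) ≃ WT n m where
  toFun qe := by
    refine ⟨((qe.1.1.1.1, qe.1.1.1.2),
      fun p => if p.2 = qe.2 p.1 then qe.1.1.2.1 p.1 else qe.1.1.2.2 p.1), qe.1.2.1, ?_, ?_⟩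
    · rintro ⟨i, bi⟩ ⟨j, bj⟩ h
      dsimp only at h
      by_cases h1 : bi = qe.2 i <;> by_cases h2 : bj = qe.2 j
      · rw [if_pos h1, if_pos h2] at h
        have hij := qe.1.2.2.2.1 h
        subst hij
        rw [h1, h2]
      · rw [if_pos h1, if_neg h2] at h
        exact absurd h (qe.1.2.2.2.2.2 _ _)
      · rw [if_neg h1, if_pos h2] at h
        exact absurd h.symm (qe.1.2.2.2.2.2 _ _)
      · rw [if_neg h1, if_neg h2] at h
        have hij := qe.1.2.2.2.2.1 h
        subst hij
        have hbb : bi = bj := by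
          cases hbi : bi <;> cases hbj : bj <;> simp_all
        rw [hbb]
    · rintro ⟨i, bi⟩
      dsimp only
      by_cases h1 : bi = qe.2 i
      · rw [if_pos h1]
        exact ⟨(qe.1.2.2.1 i).1, lt_trans (qe.1.2.2.1 i).2.1 (qe.1.2.2.1 i).2.2⟩
      · rw [if_neg h1]
        exact ⟨lt_trans (qe.1.2.2.1 i).1 (qe.1.2.2.1 i).2.1, (qe.1.2.2.1 i).2.2⟩
  invFun w := by
    have hne : ∀ i : Fin m, w.1.2 (i, false) ≠ w.1.2 (i, true) := by
      intro i h
      have h2 := w.2.2.1 h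
      simp at h2
    refine (⟨((w.1.1.1, w.1.1.2),
        (fun i => if w.1.2 (i, false) < w.1.2 (i, true) then w.1.2 (i, false) else w.1.2 (i, true),
         fun i => if w.1.2 (i, false) < w.1.2 (i, true) then w.1.2 (i, true) else w.1.2 (i, false))),
      w.2.1, ?_, ?_, ?_, ?_⟩,
      fun i => if w.1.2 (i, false) < w.1.2 (i, true) then false else true)
    · intro i
      dsimp only
      by_cases hc : w.1.2 (i, false) < w.1.2 (i, true)
      · simp only [if_pos hc]
        exact ⟨(w.2.2.2 (i, false)).1, hc, (w.2.2.2 (i, true)).2⟩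
      · simp only [if_neg hc]
        exact ⟨(w.2.2.2 (i, true)).1,
          lt_of_le_of_ne (not_lt.mp hc) (Ne.symm (hne i)), (w.2.2.2 (i, false)).2⟩
    · intro i j h
      dsimp only at h
      by_cases h1 : w.1.2 (i, false) < w.1.2 (i, true) <;>
        by_cases h2 : w.1.2 (j, false) < w.1.2 (j, true) <;>
        [rw [if_pos h1, if_pos h2] at h; rw [if_pos h1, if_neg h2] at h;
         rw [if_neg h1, if_pos h2] at h; rw [if_neg h1, if_neg h2] at h] <;>
        · have h3 := w.2.2.1 h
          simp only [Prod.mk.injEq] at h3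
          exact h3.1
    · intro i j h
      dsimp only at h
      by_cases h1 : w.1.2 (i, false) < w.1.2 (i, true) <;>
        by_cases h2 : w.1.2 (j, false) < w.1.2 (j, true) <;>
        [rw [if_pos h1, if_pos h2] at h; rw [if_pos h1, if_neg h2] at h;
         rw [if_neg h1, if_pos h2] at h; rw [if_neg h1, if_neg h2] at h] <;>
        · have h3 := w.2.2.1 h
          simp only [Prod.mk.injEq] at h3
          exact h3.1
    · intro i j h
      dsimp only at h
      by_cases h1 : w.1.2 (i, false) < w.1.2 (i, true) <;>
        by_cases h2 : w.1.2 (j, false) < w.1.2 (j, true) <;>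
        [rw [if_pos h1, if_pos h2] at h; rw [if_pos h1, if_neg h2] at h;
         rw [if_neg h1, if_pos h2] at h; rw [if_neg h1, if_neg h2] at h] <;>
        · have h3 := w.2.2.1 h
          simp only [Prod.mk.injEq] at h3
          obtain ⟨hij, hbb⟩ := h3
          subst hij
          simp_all
  left_inv qe := by
    obtain ⟨q, ε⟩ := qe
    have hcd : ∀ i, q.1.2.1 i < q.1.2.2 i := fun i => (q.2.2.1 i).2.1
    refine Prod.ext (Subtype.ext (Prod.ext rfl (Prod.ext (funext fun i => ?_)
      (funext fun i => ?_)))) (funext fun i => ?_) <;>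
      dsimp only <;> rcases (Bool.eq_false_or_eq_true (ε i)).symm with hε | hε
    · simp [hε, hcd i]
    · simp [hε, not_lt_of_gt (hcd i)]
    · simp [hε, hcd i]
    · simp [hε, not_lt_of_gt (hcd i)]
    · simp [hε, hcd i]
    · simp [hε, not_lt_of_gt (hcd i)]
  right_inv w := by
    refine Subtype.ext (Prod.ext rfl (funext fun p => ?_))
    obtain ⟨i, b⟩ := p
    by_cases hc : w.1.2 (i, false) < w.1.2 (i, true) <;> cases b <;> simp [hc]

end CountQT

section CardWT

/-- Ordered pairs in `Fin (2*n)`. -/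
abbrev ABh (n : ℕ) : Type := {p : Fin (2*n) × Fin (2*n) // p.1 < p.2}

def ABmap {n m : ℕ} (w : WT n m) : ABh n := ⟨w.1.1, w.2.1⟩

def fiberEquiv {n m : ℕ} (ab : ABh n) :
    {w : WT n m // ABmap w = ab}
      ≃ (Fin m × Bool ↪ {z : Fin (2*n) // z ∈ Finset.Ioo ab.1.1 ab.1.2}) where
  toFun wh := by
    have hab : wh.1.1.1 = ab.1 := congrArg Subtype.val wh.2
    refine ⟨fun p => ⟨wh.1.1.2 p, ?_⟩, ?_⟩
    · have h1 := (wh.1.2.2.2 p).1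
      have h2 := (wh.1.2.2.2 p).2
      rw [hab] at h1 h2
      exact Finset.mem_Ioo.mpr ⟨h1, h2⟩
    · intro p q h
      exact wh.1.2.2.1 (congrArg Subtype.val h)
  invFun e := by
    refine ⟨⟨((ab.1.1, ab.1.2), fun p => (e p).1), ab.2, ?_, ?_⟩, ?_⟩
    · intro p q h
      exact e.injective (Subtype.ext h)
    · intro p
      have := Finset.mem_Ioo.mp (e p).2
      exact this
    · exact Subtype.ext rfl
  left_inv wh := by
    apply Subtype.ext
    apply Subtype.ext
    have hab : wh.1.1.1 = ab.1 := congrArg Subtype.val wh.2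
    exact Prod.ext ((Prod.mk.eta).trans hab.symm) rfl
  right_inv e := by
    rfl

lemma card_WT (n m : ℕ) :
    Fintype.card (WT n m)
      = ∑ ab : ABh n, Nat.descFactorial ((ab.1.2 : ℕ) - (ab.1.1 : ℕ) - 1) (2*m) := by
  rw [← Fintype.card_congr (Equiv.sigmaFiberEquiv (ABmap (n := n) (m := m))),
    Fintype.card_sigma]
  refine Finset.sum_congr rfl fun ab _ => ?_
  rw [Fintype.card_congr (fiberEquiv ab), Fintype.card_embedding_eq]
  have h1 : Fintype.card {z : Fin (2*n) // z ∈ Finset.Ioo ab.1.1 ab.1.2}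
      = (ab.1.2 : ℕ) - (ab.1.1 : ℕ) - 1 := by
    rw [Fintype.card_coe, Fin.card_Ioo]
  have h2 : Fintype.card (Fin m × Bool) = 2*m := by
    simp [Fintype.card_prod, mul_comm]
  rw [h1, h2]

lemma hockey (N r : ℕ) : ∑ k ∈ Finset.range N, Nat.choose k r = N.choose (r+1) := by
  induction N with
  | zero => simp
  | succ N ih =>
    rw [Finset.sum_range_succ, ih, Nat.choose_succ_succ, Nat.succ_eq_add_one]
    omega

lemma sum_AB (n r : ℕ) :
    ∑ ab : ABh n, Nat.descFactorial ((ab.1.2 : ℕ) - (ab.1.1 : ℕ) - 1) r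
      = Nat.choose (2*n) (r+2) * r.factorial := by
  rw [← Finset.sum_subtype
    (Finset.univ.filter (fun p : Fin (2*n) × Fin (2*n) => p.1 < p.2)) (by simp)
    (fun p : Fin (2*n) × Fin (2*n) => Nat.descFactorial ((p.2 : ℕ) - (p.1 : ℕ) - 1) r)]
  rw [Finset.sum_filter, Fintype.sum_prod_type]
  have hstep : ∀ a : Fin (2*n), ∑ b : Fin (2*n),
      (if a < b then Nat.descFactorial ((b : ℕ) - (a : ℕ) - 1) r else 0)
      = ∑ j ∈ Finset.range (2*n), (if (a:ℕ) < j then Nat.descFactorial (j - (a : ℕ) - 1) r else 0) := by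
    intro a
    rw [← Fin.sum_univ_eq_sum_range (fun j => if (a:ℕ) < j then Nat.descFactorial (j - (a : ℕ) - 1) r else 0) (2*n)]
    exact Finset.sum_congr rfl fun b _ => by simp only [Fin.lt_def]
  rw [Finset.sum_congr rfl (fun a _ => hstep a)]
  rw [Fin.sum_univ_eq_sum_range (fun i => ∑ j ∈ Finset.range (2*n),
    (if i < j then Nat.descFactorial (j - i - 1) r else 0)) (2*n)]
  rw [Finset.sum_comm]
  have hinner : ∀ j ∈ Finset.range (2*n),
      ∑ i ∈ Finset.range (2*n), (if i < j then Nat.descFactorial (j - i - 1) r else 0)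
        = r.factorial * Nat.choose j (r+1) := by
    intro j hj
    rw [← Finset.sum_filter]
    have hset : (Finset.range (2*n)).filter (fun i => i < j) = Finset.range j := by
      ext i
      simp only [Finset.mem_filter, Finset.mem_range] at *
      omega
    rw [hset]
    have hre : ∀ i, (j - i - 1) = (j - 1 - i) := fun i => Nat.sub_right_comm j i 1
    rw [Finset.sum_congr rfl (fun i _ => by rw [hre i])]
    rw [Finset.sum_range_reflect (fun k => Nat.descFactorial k r) j]
    rw [Finset.sum_congr rfl (fun k _ => Nat.descFactorial_eq_factorial_mul_choose _ _)]
    rw [← Finset.mul_sum, hockey]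
  rw [Finset.sum_congr rfl hinner, ← Finset.mul_sum, hockey, mul_comm]

lemma card_QT_eq (n m : ℕ) :
    Fintype.card (QT n m) * 2^m = Nat.choose (2*n) (2*m+2) * (2*m).factorial := by
  have h1 : Fintype.card (QT n m) * 2^m = Fintype.card (WT n m) := by
    rw [← Fintype.card_congr (pairEquiv n m), Fintype.card_prod]
    congr 1
    simp
  rw [h1, card_WT, sum_AB]

lemma master (n m : ℕ) :
    (∑ p ∈ Finset.range n, Nat.descFactorial p m * Ccount n p) * 2^m
      = Nat.choose (2*n) (2*m+2) * (2*m).factorial * matchNum (2*n - 2*(m+1)) := by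
  rw [sum_descFactorial_Ccount, card_T, mul_right_comm, card_QT_eq]

end CardWT

section Arith

lemma matchNum_mul (t : ℕ) : matchNum (2*t) * (2^t * t.factorial) = (2*t).factorial := by
  induction t with
  | zero => simp [matchNum]
  | succ t ih =>
    have h2 : 2*(t+1) = (2*t)+2 := by ring
    rw [h2]
    have h3 : matchNum (2*t+2) = (2*t+1) * matchNum (2*t) := rfl
    have h4 : (2*t+2).factorial = (2*t+2) * ((2*t+1) * (2*t).factorial) := by
      rw [show (2*t+2) = (2*t+1)+1 from rfl, Nat.factorial_succ, Nat.factorial_succ]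
    rw [h3, h4, ← ih, pow_succ, Nat.factorial_succ]
    ring

lemma ddf_odd (t : ℕ) :
    Nat.doubleFactorial (2*t+1) * (2^t * t.factorial) = (2*t+1).factorial := by
  induction t with
  | zero => simp [Nat.doubleFactorial]
  | succ t ih =>
    have h2 : 2*(t+1)+1 = (2*t+1)+2 := by ring
    rw [h2, Nat.doubleFactorial_add_two]
    have h4 : ((2*t+1)+2).factorial = ((2*t+1)+2) * (((2*t+1)+1) * (2*t+1).factorial) := by
      rw [Nat.factorial_succ, Nat.factorial_succ]
    rw [h4, ← ih, pow_succ, Nat.factorial_succ]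
    ring

lemma core_nat (n m : ℕ) (hn : 1 ≤ n) :
    Nat.choose (2*n) (2*m+2) * (2*m).factorial * matchNum (2*n - 2*(m+1)) * ((2*m+1)*(2*m+2))
      = 2^(m+1) * Nat.descFactorial (n-1) m * n * Nat.doubleFactorial (2*n-1) := by
  rcases le_or_gt n m with h | h
  · rw [Nat.choose_eq_zero_of_lt (by omega), Nat.descFactorial_eq_zero_iff_lt.mpr (by omega)]
    ring
  · obtain ⟨t, rfl⟩ : ∃ t, n = m + t + 1 := ⟨n - m - 1, by omega⟩
    have e1 : 2*(m+t+1) - 2*(m+1) = 2*t := by omega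
    have e2 : 2*(m+t+1) - 1 = 2*(m+t)+1 := by omega
    have e3 : m+t+1-1 = m+t := by omega
    rw [e1, e2, e3]
    apply Nat.eq_of_mul_eq_mul_right
      (show 0 < 2^t * t.factorial * (2^(m+t) * (m+t).factorial) by positivity)
    have hA := matchNum_mul t
    have hB := ddf_odd (m+t)
    have hC : (m+t).descFactorial m * t.factorial = (m+t).factorial := by
      have h5 := Nat.factorial_mul_descFactorial (show m ≤ m+t by omega)
      rw [show m+t-m = t by omega] at h5
      rw [mul_comm]
      exact h5
    have hfact : (2*m).factorial * ((2*m+1)*(2*m+2)) = (2*m+2).factorial := by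
      rw [show (2*m+2) = (2*m+1)+1 from rfl, Nat.factorial_succ, Nat.factorial_succ]
      ring
    have hD : Nat.choose (2*(m+t+1)) (2*m+2) * (2*m+2).factorial * (2*t).factorial
        = (2*(m+t+1)).factorial := by
      have h6 := Nat.choose_mul_factorial_mul_factorial (show 2*m+2 ≤ 2*(m+t+1) by omega)
      rw [show 2*(m+t+1) - (2*m+2) = 2*t by omega] at h6
      exact h6
    have hsucc : (2*(m+t+1)).factorial = (2*(m+t)+2) * (2*(m+t)+1).factorial := by
      rw [show 2*(m+t+1) = (2*(m+t)+1)+1 by ring, Nat.factorial_succ]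
    have hpow : (2:ℕ)^(m+1) * 2^t = 2^(m+t) * 2 := by
      rw [← pow_add, ← pow_succ]
      congr 1
      omega
    calc Nat.choose (2*(m+t+1)) (2*m+2) * (2*m).factorial * matchNum (2*t) * ((2*m+1)*(2*m+2))
          * (2^t * t.factorial * (2^(m+t) * (m+t).factorial))
        = (Nat.choose (2*(m+t+1)) (2*m+2) * ((2*m).factorial * ((2*m+1)*(2*m+2)))
            * (matchNum (2*t) * (2^t * t.factorial))) * (2^(m+t) * (m+t).factorial) := by ring
      _ = (Nat.choose (2*(m+t+1)) (2*m+2) * (2*m+2).factorial * (2*t).factorial)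
            * (2^(m+t) * (m+t).factorial) := by rw [hfact, hA]
      _ = (2*(m+t+1)).factorial * (2^(m+t) * (m+t).factorial) := by rw [hD]
      _ = (2*(m+t)+2) * (2*(m+t)+1).factorial * (2^(m+t) * (m+t).factorial) := by rw [hsucc]
      _ = (2^(m+t) * 2) * ((m+t)+1) * (m+t).factorial * (2*(m+t)+1).factorial := by ring
      _ = (2^(m+1) * 2^t) * ((m+t)+1) * ((m+t).descFactorial m * t.factorial)
            * (Nat.doubleFactorial (2*(m+t)+1) * (2^(m+t) * (m+t).factorial)) := by
          rw [hpow, hC, hB]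
      _ = 2^(m+1) * (m+t).descFactorial m * (m+t+1) * Nat.doubleFactorial (2*(m+t)+1)
            * (2^t * t.factorial * (2^(m+t) * (m+t).factorial)) := by ring

end Arith

section Final

lemma moment (n : ℕ) (hn : 1 ≤ n) (m : ℕ) :
    ∑ p ∈ Finset.range n, (Nat.descFactorial p m : ℝ) *
        ((Ccount n p : ℝ) / (n * Nat.doubleFactorial (2*n - 1))) =
      (Nat.descFactorial (n-1) m : ℝ) * (1 / (((m:ℝ)+1) * (2*(m:ℝ)+1))) := by
  have hd1 : (0:ℝ) < (n : ℝ) := by exact_mod_cast hn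
  have hd2 : (0:ℝ) < (Nat.doubleFactorial (2*n-1) : ℝ) := by
    exact_mod_cast Nat.doubleFactorial_pos _
  have hden : ((n:ℝ) * (Nat.doubleFactorial (2*n-1) : ℝ)) ≠ 0 := by positivity
  set S : ℕ := ∑ p ∈ Finset.range n, Nat.descFactorial p m * Ccount n p with hSdef
  have hS : ∑ p ∈ Finset.range n, (Nat.descFactorial p m : ℝ) *
      ((Ccount n p : ℝ) / (n * Nat.doubleFactorial (2*n - 1)))
      = (S : ℝ) / (n * Nat.doubleFactorial (2*n - 1)) := by
    rw [hSdef]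
    push_cast
    rw [Finset.sum_div]
    exact Finset.sum_congr rfl fun p _ => by ring
  rw [hS]
  have combo : S * 2^m * ((2*m+1)*(2*m+2))
      = 2^(m+1) * Nat.descFactorial (n-1) m * n * Nat.doubleFactorial (2*n-1) := by
    rw [hSdef, master n m, core_nat n m hn]
  have comboR : (S:ℝ) * 2^m * ((2*(m:ℝ)+1)*(2*(m:ℝ)+2))
      = 2^(m+1) * (Nat.descFactorial (n-1) m : ℝ) * n * (Nat.doubleFactorial (2*n-1) : ℝ) := by
    exact_mod_cast combo
  have combo2 : (S:ℝ) * (((m:ℝ)+1) * (2*(m:ℝ)+1))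
      = (Nat.descFactorial (n-1) m : ℝ) * ((n:ℝ) * (Nat.doubleFactorial (2*n-1) : ℝ)) := by
    have h2 : (2:ℝ)^(m+1) ≠ 0 := by positivity
    apply mul_left_cancel₀ h2
    calc (2:ℝ)^(m+1) * ((S:ℝ) * (((m:ℝ)+1) * (2*(m:ℝ)+1)))
        = (S:ℝ) * 2^m * ((2*(m:ℝ)+1)*(2*(m:ℝ)+2)) := by rw [pow_succ]; ring
      _ = 2^(m+1) * (Nat.descFactorial (n-1) m : ℝ) * n * (Nat.doubleFactorial (2*n-1) : ℝ) :=
          comboR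
      _ = 2^(m+1) * ((Nat.descFactorial (n-1) m : ℝ)
            * ((n:ℝ) * (Nat.doubleFactorial (2*n-1) : ℝ))) := by ring
  have hm1 : ((m:ℝ)+1) * (2*(m:ℝ)+1) ≠ 0 := by positivity
  rw [mul_one_div, div_eq_div_iff hden hm1]
  linear_combination combo2

lemma descF1_cast (n : ℕ) (hn : 1 ≤ n) : ((Nat.descFactorial (n-1) 1 : ℕ) : ℝ) = (n:ℝ) - 1 := by
  rw [Nat.descFactorial_one]
  push_cast [Nat.cast_sub hn]
  ring

lemma descF2_cast (n : ℕ) (hn : 1 ≤ n) :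
    ((Nat.descFactorial (n-1) 2 : ℕ) : ℝ) = ((n:ℝ) - 1) * ((n:ℝ) - 2) := by
  rcases Nat.lt_or_ge n 2 with h | h
  · have : n = 1 := by omega
    subst this
    norm_num
  · have h1 : Nat.descFactorial (n-1) 2 = (n-2) * (n-1) := by
      rw [show (2:ℕ) = 1+1 from rfl, Nat.descFactorial_succ, Nat.descFactorial_one]
      have : n - 1 - 1 = n - (1+1) := by omega
      rw [this]
    rw [h1]
    push_cast [Nat.cast_sub hn, Nat.cast_sub h]
    ring

theorem C_factorial_moment' (n : ℕ) (hn : 1 ≤ n) :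
    (∀ m : ℕ, m ≤ n - 1 →
      ∑ p ∈ Finset.range n, (Nat.descFactorial p m : ℝ) *
          ((Ccount n p : ℝ) / (n * Nat.doubleFactorial (2*n - 1))) =
        (Nat.descFactorial (n-1) m : ℝ) * (1 / (((m:ℝ)+1) * (2*(m:ℝ)+1)))) ∧
    (∑ p ∈ Finset.range n, (p : ℝ) *
        ((Ccount n p : ℝ) / (n * Nat.doubleFactorial (2*n - 1))) = ((n:ℝ) - 1) / 6) ∧
    (∑ p ∈ Finset.range n, ((p : ℝ) - ((n:ℝ) - 1) / 6)^2 *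
        ((Ccount n p : ℝ) / (n * Nat.doubleFactorial (2*n - 1))) =
      ((n:ℝ) - 1) * (7*(n:ℝ) + 11) / 180) := by
  have hc0 : ∀ p : ℕ, ((Nat.descFactorial p 0 : ℕ) : ℝ) = 1 := by simp
  have hc1 : ∀ p : ℕ, ((Nat.descFactorial p 1 : ℕ) : ℝ) = (p : ℝ) := by
    intro p; rw [Nat.descFactorial_one]
  have hc2 : ∀ p : ℕ, ((Nat.descFactorial p 2 : ℕ) : ℝ) = (p:ℝ)^2 - (p:ℝ) := by
    intro p
    cases p with
    | zero => simp
    | succ q =>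
      rw [show (2:ℕ) = 1+1 from rfl, Nat.descFactorial_succ, Nat.descFactorial_one,
        Nat.succ_sub_one]
      push_cast
      ring
  have hmean : ∑ p ∈ Finset.range n, (p : ℝ) *
      ((Ccount n p : ℝ) / (n * Nat.doubleFactorial (2*n - 1))) = ((n:ℝ) - 1) / 6 := by
    have h1 := moment n hn 1
    rw [descF1_cast n hn] at h1
    have hsum1 : ∑ p ∈ Finset.range n, (p : ℝ) *
        ((Ccount n p : ℝ) / (n * Nat.doubleFactorial (2*n - 1)))
        = ∑ p ∈ Finset.range n, (Nat.descFactorial p 1 : ℝ) *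
            ((Ccount n p : ℝ) / (n * Nat.doubleFactorial (2*n - 1))) :=
      Finset.sum_congr rfl fun p _ => by rw [hc1 p]
    rw [hsum1, h1]
    push_cast
    ring
  refine ⟨fun m _ => moment n hn m, hmean, ?_⟩
  have h0 := moment n hn 0
  have h1 := moment n hn 1
  have h2 := moment n hn 2
  rw [descF1_cast n hn] at h1
  rw [descF2_cast n hn] at h2
  rw [show ((Nat.descFactorial (n-1) 0 : ℕ) : ℝ) = 1 from hc0 _] at h0
  have hsplit : ∑ p ∈ Finset.range n, ((p : ℝ) - ((n:ℝ) - 1) / 6)^2 *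
      ((Ccount n p : ℝ) / (n * Nat.doubleFactorial (2*n - 1)))
      = (∑ p ∈ Finset.range n, (Nat.descFactorial p 2 : ℝ) *
          ((Ccount n p : ℝ) / (n * Nat.doubleFactorial (2*n - 1))))
        + ((1 - 2*(((n:ℝ) - 1)/6)) * ∑ p ∈ Finset.range n, (Nat.descFactorial p 1 : ℝ) *
            ((Ccount n p : ℝ) / (n * Nat.doubleFactorial (2*n - 1))))
        + ((((n:ℝ) - 1)/6)^2 * ∑ p ∈ Finset.range n, (Nat.descFactorial p 0 : ℝ) *
            ((Ccount n p : ℝ) / (n * Nat.doubleFactorial (2*n - 1)))) := by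
    rw [Finset.mul_sum, Finset.mul_sum, ← Finset.sum_add_distrib, ← Finset.sum_add_distrib]
    refine Finset.sum_congr rfl fun p _ => ?_
    rw [hc2 p, hc1 p, hc0 p]
    ring
  rw [hsplit, h0, h1, h2]
  push_cast
  ring

end Final

theorem C_factorial_moment (n : ℕ) (hn : 1 ≤ n) :
    (∀ m : ℕ, m ≤ n - 1 →
      ∑ p ∈ Finset.range n, (Nat.descFactorial p m : ℝ) *
          ((Ccount n p : ℝ) / (n * Nat.doubleFactorial (2*n - 1))) =
        (Nat.descFactorial (n-1) m : ℝ) * (1 / (((m:ℝ)+1) * (2*(m:ℝ)+1)))) ∧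
    (∑ p ∈ Finset.range n, (p : ℝ) *
        ((Ccount n p : ℝ) / (n * Nat.doubleFactorial (2*n - 1))) = ((n:ℝ) - 1) / 6) ∧
    (∑ p ∈ Finset.range n, ((p : ℝ) - ((n:ℝ) - 1) / 6)^2 *
        ((Ccount n p : ℝ) / (n * Nat.doubleFactorial (2*n - 1))) =
      ((n:ℝ) - 1) * (7*(n:ℝ) + 11) / 180) := by
  exact C_factorial_moment' n hn
end

section
/- For every m ≥ 0, ∫₀¹ x^m·(1/√x - 1) dx = 1/((m+1)(2m+1)); consequently the asymptotic density of the fraction of contained chords is 𝒞(x) = 1/√x - 1 on (0,1]. -/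
open scoped BigOperators

theorem C_asymptotic_density (m : ℕ) :
    ∫ x in (0:ℝ)..1, x^m * (1 / Real.sqrt x - 1) =
      1 / (((m:ℝ)+1) * (2*(m:ℝ)+1)) := by
  have hcong : ∀ x ∈ Set.uIcc (0:ℝ) 1,
      x^m * (1 / Real.sqrt x - 1) = x ^ ((m:ℝ) - 1/2) - x ^ (m:ℝ) := by
    intro x hx
    rw [Set.uIcc_of_le (by norm_num)] at hx
    rcases eq_or_lt_of_le hx.1 with h0 | h0
    · subst h0
      rcases Nat.eq_zero_or_pos m with hm | hm
      · subst hm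
        simp [Real.zero_rpow, Real.sqrt_zero]
      · have hm' : (1:ℝ) ≤ (m:ℝ) := Nat.one_le_cast.mpr hm
        rw [Real.zero_rpow (by intro h; linarith [(sub_eq_zero.mp h)] : (m:ℝ) - 1/2 ≠ 0),
          Real.zero_rpow (by positivity : (m:ℝ) ≠ 0), zero_pow hm.ne']
        ring
    · have hs : Real.sqrt x = x ^ ((1:ℝ)/2) := Real.sqrt_eq_rpow x
      rw [hs, ← Real.rpow_natCast x m, mul_sub, mul_one,
        one_div, ← Real.rpow_neg h0.le, ← Real.rpow_add h0]
      ring_nf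
  rw [intervalIntegral.integral_congr hcong]
  have h1 : (-1:ℝ) < (m:ℝ) - 1/2 := by
    have : (0:ℝ) ≤ (m:ℝ) := Nat.cast_nonneg m
    linarith
  have h2 : (-1:ℝ) < (m:ℝ) := by
    have : (0:ℝ) ≤ (m:ℝ) := Nat.cast_nonneg m
    linarith
  rw [intervalIntegral.integral_sub (intervalIntegral.intervalIntegrable_rpow' h1)
    (intervalIntegral.intervalIntegrable_rpow' h2),
    integral_rpow (Or.inl h1), integral_rpow (Or.inl h2)]
  have hm1 : ((m:ℝ) - 1/2) + 1 ≠ 0 := by linarith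
  have hm2 : (m:ℝ) + 1 ≠ 0 := by linarith
  rw [Real.one_rpow, Real.one_rpow,
    Real.zero_rpow (by linarith : ((m:ℝ) - 1/2) + 1 ≠ 0),
    Real.zero_rpow (by linarith : (m:ℝ) + 1 ≠ 0)]
  have h3 : 2*(m:ℝ)+1 ≠ 0 := by positivity
  rw [show ((m:ℝ) - 1/2) + 1 = (2*(m:ℝ)+1)/2 by ring]
  field_simp
  ring
end

section
/- The m-th factorial moment of the distribution of the number of chords containing the marked chord, in a uniformly random marked linear chord diagram on 2n vertices, equals ((n-1)!/(n-m-1)!)·m!/((m+1)(2m+1)!!). In particular the mean is (n-1)/6 and the variance is (n-1)(3n+19)/180. -/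
open scoped BigOperators

section Aux

open Finset

def MatchingT (α : Type*) : Type _ :=
  {f : α → α // (∀ x, f (f x) = x) ∧ ∀ x, f x ≠ x}

instance (α : Type*) [Fintype α] [DecidableEq α] : Fintype (MatchingT α) := by
  unfold MatchingT; infer_instance

instance (α : Type*) [Fintype α] [DecidableEq α] : DecidableEq (MatchingT α) := by
  unfold MatchingT; infer_instance

/-- Restricting a matching that extends a fixed partial matching `j` on `s`
to the complement of `s`. -/
def restrictEquiv {α : Type*} [Fintype α] [DecidableEq α] (s : Finset α) (j : α → α)
    (hj1 : ∀ x ∈ s, j x ∈ s) (hj2 : ∀ x ∈ s, j (j x) = x) (hj3 : ∀ x ∈ s, j x ≠ x) :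
    {F : MatchingT α // ∀ x ∈ s, F.1 x = j x} ≃ MatchingT {x : α // x ∉ s} where
  toFun F := ⟨fun x => ⟨F.1.1 x.1, by
      intro hmem
      have h1 : F.1.1 (F.1.1 x.1) = j (F.1.1 x.1) := F.2 _ hmem
      have h2 : F.1.1 (F.1.1 x.1) = x.1 := F.1.2.1 x.1
      have : (x : α) ∈ s := by rw [← h2, h1]; exact hj1 _ hmem
      exact x.2 this⟩,
    fun x => Subtype.ext (F.1.2.1 x.1),
    fun x hx => F.1.2.2 x.1 (congrArg Subtype.val hx)⟩
  invFun G := ⟨⟨fun x => if h : x ∈ s then j x else (G.1 ⟨x, h⟩).1, by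
      constructor
      · intro x
        by_cases h : x ∈ s
        · simp only [dif_pos h, dif_pos (hj1 x h)]; exact hj2 x h
        · simp only [dif_neg h, dif_neg (G.1 ⟨x, h⟩).2]
          exact congrArg Subtype.val (G.2.1 ⟨x, h⟩)
      · intro x hx
        by_cases h : x ∈ s
        · simp only [dif_pos h] at hx; exact hj3 x h hx
        · simp only [dif_neg h] at hx; exact G.2.2 ⟨x, h⟩ (Subtype.ext hx)⟩,
    fun x hx => dif_pos hx⟩
  left_inv F := by
    apply Subtype.ext; apply Subtype.ext; funext x
    by_cases h : x ∈ s
    · simp only [dif_pos h]; exact (F.2 x h).symm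
    · simp only [dif_neg h]
  right_inv G := by
    apply Subtype.ext; funext x
    apply Subtype.ext
    simp only [dif_neg x.2]

theorem card_matchingT : ∀ (k : ℕ) (α : Type) [Fintype α] [DecidableEq α],
    Fintype.card α = 2 * k →
    Fintype.card (MatchingT α) = Nat.doubleFactorial (2 * k - 1) := by
  intro k
  induction k with
  | zero =>
    intro α _ _ hc
    haveI : IsEmpty α := Fintype.card_eq_zero_iff.mp (by simpa using hc)
    haveI : Unique (MatchingT α) :=
      { default := ⟨fun x => x, fun x => isEmptyElim x, fun x => isEmptyElim x⟩
        uniq := fun F => Subtype.ext (funext fun x => isEmptyElim x) }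
    simp [Fintype.card_unique]
  | succ k ih =>
    intro α _ _ hc
    have hpos : 0 < Fintype.card α := by omega
    obtain ⟨x0⟩ := Fintype.card_pos_iff.mp hpos
    -- fibers of F ↦ F.1 x0
    have hfib : ∀ y : α, y ≠ x0 →
        Fintype.card {F : MatchingT α // F.1 x0 = y} = Nat.doubleFactorial (2 * k - 1) := by
      intro y hy
      let s : Finset α := {x0, y}
      let j : α → α := fun x => if x = x0 then y else if x = y then x0 else x
      have hj1 : ∀ x ∈ s, j x ∈ s := by
        intro x hx; simp only [s, mem_insert, mem_singleton] at hx ⊢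
        rcases hx with h | h <;> subst h <;> simp [j, hy]
      have hj2 : ∀ x ∈ s, j (j x) = x := by
        intro x hx; simp only [s, mem_insert, mem_singleton] at hx
        rcases hx with h | h <;> subst h <;> simp [j, hy, hy.symm]
      have hj3 : ∀ x ∈ s, j x ≠ x := by
        intro x hx; simp only [s, mem_insert, mem_singleton] at hx
        rcases hx with h | h <;> subst h <;> simp [j, hy, hy.symm]
      have e1 : {F : MatchingT α // F.1 x0 = y} ≃ {F : MatchingT α // ∀ x ∈ s, F.1 x = j x} := by
        apply Equiv.subtypeEquivRight
        intro F
        constructor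
        · intro hF x hx
          simp only [s, mem_insert, mem_singleton] at hx
          rcases hx with h | h
          · subst h; simpa [j] using hF
          · subst h
            have hyx : F.1 (F.1 x0) = x0 := F.2.1 x0
            rw [hF] at hyx
            have hjy : j x = x0 := by simp [j, hy]
            rw [hyx, hjy]
        · intro h
          have := h x0 (by simp [s])
          simpa [j] using this
      have e2 := restrictEquiv s j hj1 hj2 hj3
      have hs2 : Fintype.card {x : α // x ∈ s} = 2 := by
        rw [Fintype.card_coe]
        rw [card_insert_of_notMem (by simp [hy.symm]), card_singleton]
      have hcard : Fintype.card {x : α // x ∉ s} = 2 * k := by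
        have h3 := Fintype.card_subtype_compl (fun x => x ∈ s) (α := α)
        rw [hs2] at h3
        rw [h3, hc]
        omega
      rw [Fintype.card_congr (e1.trans e2)]
      exact ih _ hcard
    have hfib0 : Fintype.card {F : MatchingT α // F.1 x0 = x0} = 0 := by
      rw [Fintype.card_eq_zero_iff]
      exact ⟨fun F => F.1.2.2 x0 F.2⟩
    have hsum : Fintype.card (MatchingT α)
        = ∑ y : α, Fintype.card {F : MatchingT α // F.1 x0 = y} := by
      classical
      simp only [Fintype.card_subtype]
      rw [← Finset.card_eq_sum_card_fiberwise (f := fun F : MatchingT α => F.1 x0)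
        (t := univ) (fun _ _ => mem_univ _)]
      simp
    rw [hsum, ← Finset.add_sum_erase _ _ (mem_univ x0), hfib0, Nat.zero_add]
    rw [Finset.sum_congr rfl (fun y hy => hfib y (Finset.ne_of_mem_erase hy))]
    rw [Finset.sum_const, Finset.card_erase_of_mem (mem_univ x0), Finset.card_univ, hc]
    have h1 : 2 * (k + 1) - 1 = 2 * k + 1 := by omega
    have h2 : 2 * (k+1) - 1 - 1 = 2 * k := by omega
    rw [h1]
    have := Nat.doubleFactorial_add_two (2*k - 1)
    rcases Nat.eq_zero_or_pos k with hk | hk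
    · subst hk; simp [Nat.doubleFactorial]
    · have h3 : 2*k - 1 + 2 = 2*k + 1 := by omega
      rw [h3] at this
      rw [this, smul_eq_mul]

/-- Vandermonde-type convolution in the upper index. -/
theorem chooseConv (m : ℕ) : ∀ (t k : ℕ),
    ∑ i ∈ range t, (i.choose m) * ((t - 1 - i).choose k) = t.choose (m + k + 1) := by
  intro t
  induction t with
  | zero => intro k; simp [Nat.choose_eq_zero_of_lt (by omega : 0 < m + k + 1)]
  | succ t ih =>
    intro k
    rw [Finset.sum_range_succ]
    cases k with
    | zero =>
      have h1 : ∀ i ∈ range t, i.choose m * ((t + 1 - 1 - i).choose 0)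
          = i.choose m * ((t - 1 - i).choose 0) := by
        intro i hi; simp
      rw [Finset.sum_congr rfl h1, ih 0]
      simp [Nat.choose_succ_succ, Nat.add_comm]
    | succ k =>
      have h0 : ((t + 1 - 1 - t).choose (k + 1)) = 0 := by
        have : t + 1 - 1 - t = 0 := by omega
        rw [this]; exact Nat.choose_eq_zero_of_lt (by omega)
      have h1 : ∀ i ∈ range t, i.choose m * ((t + 1 - 1 - i).choose (k + 1))
          = i.choose m * ((t - 1 - i).choose k) + i.choose m * ((t - 1 - i).choose (k + 1)) := by
        intro i hi
        have hi' := mem_range.mp hi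
        have h2 : t + 1 - 1 - i = (t - 1 - i) + 1 := by omega
        rw [h2, Nat.choose_succ_succ, Nat.mul_add]
      rw [Finset.sum_congr rfl h1, Finset.sum_add_distrib, ih k, ih (k+1), h0, Nat.mul_zero,
        Nat.add_zero]
      have : m + k + 1 + 1 = m + (k+1) + 1 := by omega
      rw [← this, ← Nat.choose_succ_succ']

theorem sumIdent (N m : ℕ) :
    ∑ a ∈ range N, ∑ b ∈ range N, (if a < b then (a.choose m) * ((N - 1 - b).choose m) else 0)
      = N.choose (2 * m + 2) := by
  have hinner : ∀ a ∈ range N,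
      ∑ b ∈ range N, (if a < b then (a.choose m) * ((N - 1 - b).choose m) else 0)
        = a.choose m * ((N - 1 - a).choose (m + 1)) := by
    intro a ha
    have ha' := mem_range.mp ha
    have hfil : filter (fun b => a < b) (range N) = Ico (a+1) N := by
      ext b; simp [Finset.mem_filter, Finset.mem_range, Finset.mem_Ico]; omega
    rw [← Finset.sum_filter, hfil, ← Finset.mul_sum]
    congr 1
    rw [show (N - 1 - a).choose (m+1) = (N - 1 - a).choose (m + 0 + 1) by norm_num,
      ← chooseConv m (N - 1 - a) 0]
    apply Finset.sum_nbij' (fun b => N - 1 - b) (fun j => N - 1 - j)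
    · intro b hb; simp only [Finset.mem_Ico] at hb; simp only [Finset.mem_range]; omega
    · intro j hj; simp only [Finset.mem_range] at hj; simp only [Finset.mem_Ico]; omega
    · intro b hb; simp only [Finset.mem_Ico] at hb; omega
    · intro j hj; simp only [Finset.mem_range] at hj; omega
    · intro b hb; simp only [Finset.mem_Ico] at hb
      have : N - 1 - (N - 1 - b) = b := by omega
      simp [this]
  rw [Finset.sum_congr rfl hinner]
  rw [show 2 * m + 2 = m + (m + 1) + 1 by omega, ← chooseConv m N (m+1)]

section ArithSec
open Nat

theorem fact2mul (j : ℕ) : (2*j)! = 2^j * j ! * Nat.doubleFactorial (2*j - 1) := by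
  cases j with
  | zero => rfl
  | succ j =>
    have h1 : 2 * (j+1) = (2*(j+1) - 1) + 1 := by omega
    rw [h1, Nat.factorial_eq_mul_doubleFactorial]
    rw [← h1, Nat.doubleFactorial_two_mul]

theorem arith (n m : ℕ) (hn : 1 ≤ n) :
    (m !)^2 * ((2*n).choose (2*m+2)) * Nat.doubleFactorial (2*(n-m-1)-1)
      * ((m+1) * Nat.doubleFactorial (2*m+1))
    = n * Nat.doubleFactorial (2*n-1) * (n-1).descFactorial m * m ! := by
  rcases le_or_gt n m with hm | hm
  · rw [Nat.choose_eq_zero_of_lt (by omega), Nat.descFactorial_eq_zero_iff_lt.mpr (by omega)]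
    ring
  · -- m + 1 ≤ n
    set k := n - m - 1 with hk
    have hn' : n = m + 1 + k := by omega
    have e1 : Nat.doubleFactorial (2*k - 1) * (2^k * k !) = (2*k)! := by
      rw [fact2mul]; ring
    have e2 : Nat.doubleFactorial (2*m+1) * (2^(m+1) * (m+1)!) = (2*m+2)! := by
      have := fact2mul (m+1)
      have h1 : 2*(m+1) = 2*m+2 := by omega
      rw [h1, show 2*m+2 - 1 = 2*m+1 from by omega] at this
      rw [this]; ring
    have e3 : (2*n).choose (2*m+2) * (2*m+2)! * (2*k)! = (2*n)! := by
      have h1 : 2*n - (2*m+2) = 2*k := by omega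
      have := Nat.choose_mul_factorial_mul_factorial (n := 2*n) (k := 2*m+2) (by omega)
      rw [h1] at this; exact this
    have e4 : Nat.doubleFactorial (2*n-1) * (2^n * n !) = (2*n)! := by
      rw [fact2mul]; ring
    have e5 : (n-1).descFactorial m * k ! = (n-1)! := by
      have h1 : n - 1 - m = k := by omega
      have := Nat.factorial_mul_descFactorial (n := n-1) (k := m) (by omega)
      rw [h1] at this; rw [← this]; ring
    have e6 : n * (n-1)! = n ! := Nat.mul_factorial_pred (by omega)
    -- move to ℝ
    have goalR : ((m !)^2 * ((2*n).choose (2*m+2)) * Nat.doubleFactorial (2*(n-m-1)-1)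
        * ((m+1) * Nat.doubleFactorial (2*m+1)) : ℝ)
        = (n * Nat.doubleFactorial (2*n-1) * (n-1).descFactorial m * m ! : ℝ) := by
      have f1 : (0:ℝ) < 2^k * (k ! : ℝ) := by positivity
      have f2 : (0:ℝ) < 2^(m+1) * ((m+1)! : ℝ) := by positivity
      have f4 : (0:ℝ) < 2^n * (n ! : ℝ) := by positivity
      have f5 : (0:ℝ) < (k ! : ℝ) := by positivity
      have f3 : (0:ℝ) < ((2*m+2)! : ℝ) * ((2*k)! : ℝ) := by positivity
      have hd1 : (Nat.doubleFactorial (2*(n-m-1)-1) : ℝ) = ((2*k)! : ℝ) / (2^k * (k ! : ℝ)) := by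
        rw [eq_div_iff (ne_of_gt f1), ← hk]; exact_mod_cast e1
      have hd2 : (Nat.doubleFactorial (2*m+1) : ℝ) = ((2*m+2)! : ℝ) / (2^(m+1) * ((m+1)! : ℝ)) := by
        rw [eq_div_iff (ne_of_gt f2)]; exact_mod_cast e2
      have hd4 : (Nat.doubleFactorial (2*n-1) : ℝ) = ((2*n)! : ℝ) / (2^n * (n ! : ℝ)) := by
        rw [eq_div_iff (ne_of_gt f4)]; exact_mod_cast e4
      have hc3 : (((2*n).choose (2*m+2)) : ℝ) = ((2*n)! : ℝ) / (((2*m+2)! : ℝ) * ((2*k)! : ℝ)) := by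
        rw [eq_div_iff (ne_of_gt f3)]
        have := e3; push_cast [← this]; ring
      have hd5 : (((n-1).descFactorial m) : ℝ) = ((n-1)! : ℝ) / (k ! : ℝ) := by
        rw [eq_div_iff (ne_of_gt f5)]; exact_mod_cast e5
      have hfn : ((n:ℝ)) * ((n-1)! : ℝ) = (n ! : ℝ) := by exact_mod_cast e6
      have hfm : ((m+1)! : ℝ) = ((m:ℝ)+1) * (m ! : ℝ) := by
        rw [Nat.factorial_succ]; push_cast; ring
      have hpn : (2:ℝ)^n = 2^(m+1) * 2^k := by rw [hn']; ring
      rw [hd1, hd2, hd4, hc3, hd5, ← hfn, hfm, hpn]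
      push_cast
      field_simp
    exact_mod_cast goalR

end ArithSec
end Aux
section Diagrams
open Finset

variable {n m : ℕ}

/-- A pattern: a marked chord `(a,b)` together with `m` ordered chords `(c i, d i)`
each containing it. -/
def Pattern (n m : ℕ) : Type :=
  {w : (Fin (2*n) × Fin (2*n)) × (Fin m → Fin (2*n)) × (Fin m → Fin (2*n)) //
    w.1.1 < w.1.2 ∧ Function.Injective w.2.1 ∧ Function.Injective w.2.2 ∧
    ∀ i, w.2.1 i < w.1.1 ∧ w.1.2 < w.2.2 i}

instance (n m : ℕ) : Fintype (Pattern n m) := by unfold Pattern; infer_instance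
instance (n m : ℕ) : DecidableEq (Pattern n m) := by unfold Pattern; infer_instance

/-- Matchings extending the partial matching prescribed by a pattern. -/
def PExt (n m : ℕ) (w : Pattern n m) : Type :=
  {f : Fin (2*n) → Fin (2*n) //
    (∀ x, f (f x) = x) ∧ (∀ x, f x ≠ x) ∧ f w.1.1.1 = w.1.1.2 ∧ ∀ i, f (w.1.2.1 i) = w.1.2.2 i}

instance (n m : ℕ) (w : Pattern n m) : Fintype (PExt n m w) := by unfold PExt; infer_instance

/-- The main structural equivalence. -/
def E1 (n m : ℕ) :
    (Σ D : MarkedDiagram n,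
      (Fin m ↪ {c : Fin (2*n) // c < D.f c ∧ c < D.a ∧ D.b < D.f c}))
    ≃ Σ w : Pattern n m, PExt n m w where
  toFun := fun ⟨D, e⟩ =>
    ⟨⟨((D.1.2, D.1.1 D.1.2), fun i => (e i).1, fun i => D.1.1 (e i).1),
      ⟨D.2.2.2, fun i j h => e.injective (Subtype.ext h),
       fun i j h => e.injective (Subtype.ext (by
         have h2 := congrArg D.1.1 h; rwa [D.2.1, D.2.1] at h2)),
       fun i => ⟨(e i).2.2.1, (e i).2.2.2⟩⟩⟩,
     ⟨D.1.1, D.2.1, D.2.2.1, rfl, fun i => rfl⟩⟩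
  invFun := fun ⟨w, F⟩ =>
    ⟨⟨(F.1, w.1.1.1), F.2.1, F.2.2.1, by
        show w.1.1.1 < F.1 w.1.1.1
        rw [F.2.2.2.1]; exact w.2.1⟩,
     ⟨fun i => ⟨w.1.2.1 i, by
        refine ⟨?_, (w.2.2.2.2 i).1, ?_⟩
        · show w.1.2.1 i < F.1 (w.1.2.1 i)
          rw [F.2.2.2.2 i]
          exact lt_trans (lt_trans (w.2.2.2.2 i).1 w.2.1) (w.2.2.2.2 i).2
        · show F.1 w.1.1.1 < F.1 (w.1.2.1 i)
          rw [F.2.2.2.1, F.2.2.2.2 i]; exact (w.2.2.2.2 i).2⟩,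
      fun i j h => w.2.2.1 (congrArg Subtype.val h)⟩⟩
  left_inv := fun ⟨D, e⟩ => rfl
  right_inv := fun ⟨w, F⟩ => by
    have key : ∀ (w1 w2 : Pattern n m) (h : w1 = w2) (F1 : PExt n m w1) (F2 : PExt n m w2),
        F1.1 = F2.1 → (⟨w1, F1⟩ : Σ w, PExt n m w) = ⟨w2, F2⟩ := by
      rintro w1 w2 rfl F1 F2 h
      exact congrArg _ (Subtype.ext h)
    apply key
    · apply Subtype.ext
      refine Prod.ext ?_ (Prod.ext rfl ?_)
      · exact Prod.ext rfl F.2.2.2.1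
      · exact funext F.2.2.2.2
    · rfl

theorem cardIio (N : ℕ) (a : Fin N) : Fintype.card {x : Fin N // x < a} = a := by
  rw [Fintype.card_congr
    (⟨fun x => (⟨x.1.1, x.2⟩ : Fin a.1),
      fun y => ⟨⟨y.1, lt_trans y.2 a.2⟩, y.2⟩,
      fun x => rfl, fun y => rfl⟩ : {x : Fin N // x < a} ≃ Fin a.1)]
  exact Fintype.card_fin _

theorem cardIoi (N : ℕ) (a : Fin N) : Fintype.card {x : Fin N // a < x} = N - 1 - a := by
  have ha := a.2
  rw [Fintype.card_congr
    (⟨fun x => (⟨x.1.1 - a.1 - 1, by have := x.1.2; have := x.2; omega⟩ : Fin (N - 1 - a.1)),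
      fun y => ⟨⟨y.1 + a.1 + 1, by have := y.2; omega⟩, by
        show a.1 < y.1 + a.1 + 1; omega⟩,
      fun x => by apply Subtype.ext; apply Fin.ext; have := x.2; show x.1.1 - a.1 - 1 + a.1 + 1 = x.1.1; omega,
      fun y => by apply Fin.ext; show y.1 + a.1 + 1 - a.1 - 1 = y.1; omega⟩ :
      {x : Fin N // a < x} ≃ Fin (N - 1 - a.1))]
  exact Fintype.card_fin _

def E2 (n m : ℕ) :
    Pattern n m ≃ Σ ab : {p : Fin (2*n) × Fin (2*n) // p.1 < p.2},
      ((Fin m ↪ {x : Fin (2*n) // x < ab.1.1}) × (Fin m ↪ {x : Fin (2*n) // ab.1.2 < x})) where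
  toFun w := ⟨⟨w.1.1, w.2.1⟩,
    ⟨fun i => ⟨w.1.2.1 i, (w.2.2.2.2 i).1⟩, fun i j h => w.2.2.1 (congrArg Subtype.val h)⟩,
    ⟨fun i => ⟨w.1.2.2 i, (w.2.2.2.2 i).2⟩, fun i j h => w.2.2.2.1 (congrArg Subtype.val h)⟩⟩
  invFun x := ⟨(x.1.1, fun i => (x.2.1 i).1, fun i => (x.2.2 i).1),
    x.1.2, fun i j h => x.2.1.injective (Subtype.ext h),
    fun i j h => x.2.2.injective (Subtype.ext h),
    fun i => ⟨(x.2.1 i).2, (x.2.2 i).2⟩⟩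
  left_inv w := rfl
  right_inv x := rfl

theorem cardPattern (n m : ℕ) :
    Fintype.card (Pattern n m) = (m.factorial)^2 * ((2*n).choose (2*m+2)) := by
  rw [Fintype.card_congr (E2 n m), Fintype.card_sigma]
  have h1 : ∀ ab : {p : Fin (2*n) × Fin (2*n) // p.1 < p.2},
      Fintype.card ((Fin m ↪ {x : Fin (2*n) // x < ab.1.1}) × (Fin m ↪ {x : Fin (2*n) // ab.1.2 < x}))
      = ((ab.1.1 : ℕ).descFactorial m) * ((2*n - 1 - (ab.1.2 : ℕ)).descFactorial m) := by
    intro ab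
    rw [Fintype.card_prod, Fintype.card_embedding_eq, Fintype.card_embedding_eq,
      Fintype.card_fin, cardIio, cardIoi]
  rw [Finset.sum_congr rfl (fun ab _ => h1 ab)]
  rw [← Finset.sum_subtype (Finset.univ.filter (fun p : Fin (2*n) × Fin (2*n) => p.1 < p.2))
    (by intro x; simp) (fun p => ((p.1 : ℕ).descFactorial m) * ((2*n - 1 - (p.2 : ℕ)).descFactorial m))]
  rw [Finset.sum_filter]
  rw [Fintype.sum_prod_type]
  have h2 : ∀ a : Fin (2*n), ∀ b : Fin (2*n),
      (if a < b then ((a : ℕ).descFactorial m) * ((2*n - 1 - (b : ℕ)).descFactorial m) else 0)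
      = (m.factorial)^2 * (if a < b then ((a:ℕ).choose m) * ((2*n - 1 - (b:ℕ)).choose m) else 0) := by
    intro a b
    split
    · rw [Nat.descFactorial_eq_factorial_mul_choose, Nat.descFactorial_eq_factorial_mul_choose]
      ring
    · rw [Nat.mul_zero]
  simp only [h2]
  simp only [← Finset.mul_sum]
  congr 1
  have h4 : (∑ a : Fin (2*n), ∑ b : Fin (2*n),
      if a < b then ((a:ℕ).choose m) * ((2*n - 1 - (b:ℕ)).choose m) else 0)
      = ∑ a ∈ Finset.range (2*n), ∑ b ∈ Finset.range (2*n),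
          (if a < b then (a.choose m) * ((2*n - 1 - b).choose m) else 0) := by
    rw [← Fin.sum_univ_eq_sum_range (fun a => ∑ b ∈ Finset.range (2*n),
      (if a < b then (a.choose m) * ((2*n - 1 - b).choose m) else 0)) (2*n)]
    apply Finset.sum_congr rfl
    intro a _
    rw [← Fin.sum_univ_eq_sum_range (fun b => (if (a:ℕ) < b then ((a:ℕ).choose m) * ((2*n - 1 - b).choose m) else 0)) (2*n)]
    apply Finset.sum_congr rfl
    intro b _
    exact if_congr Fin.lt_def rfl rfl
  rw [h4, sumIdent]

theorem cardPExt (n m : ℕ) (w : Pattern n m) :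
    Fintype.card (PExt n m w) = Nat.doubleFactorial (2*(n-m-1) - 1) := by
  classical
  obtain ⟨⟨⟨a, b⟩, c, d⟩, hab, hc, hd, hcd⟩ := w
  -- basic inequalities
  have hca : ∀ i, c i ≠ a := fun i => ne_of_lt (hcd i).1
  have hcb : ∀ i, c i ≠ b := fun i => ne_of_lt (lt_trans (hcd i).1 hab)
  have hda : ∀ i, d i ≠ a := fun i => ne_of_gt (lt_trans hab (hcd i).2)
  have hdb : ∀ i, d i ≠ b := fun i => ne_of_gt (hcd i).2
  have hdc : ∀ i i', c i' ≠ d i :=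
    fun i i' => ne_of_lt (lt_trans (lt_trans (hcd i').1 hab) (hcd i).2)
  have hba : b ≠ a := ne_of_gt hab
  set s : Finset (Fin (2*n)) :=
    ({a, b} ∪ Finset.image c Finset.univ) ∪ Finset.image d Finset.univ with hs
  have mem_s : ∀ x, x ∈ s ↔ x = a ∨ x = b ∨ (∃ i, c i = x) ∨ (∃ i, d i = x) := by
    intro x
    simp only [hs, Finset.mem_union, Finset.mem_insert, Finset.mem_singleton,
      Finset.mem_image, Finset.mem_univ, true_and]
    tauto
  set j : Fin (2*n) → Fin (2*n) := fun x =>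
    if x = a then b else if x = b then a else
    if h : (∃ i, c i = x) then d h.choose else
    if h : (∃ i, d i = x) then c h.choose else x with hj
  have hja : j a = b := by simp [hj]
  have hjb : j b = a := by simp [hj, hba]
  have hjc : ∀ i, j (c i) = d i := by
    intro i
    have hex : ∃ i', c i' = c i := ⟨i, rfl⟩
    simp only [hj, if_neg (hca i), if_neg (hcb i), dif_pos hex]
    congr 1
    exact hc hex.choose_spec
  have hjd : ∀ i, j (d i) = c i := by
    intro i
    have hex : ∃ i', d i' = d i := ⟨i, rfl⟩
    have hnc : ¬ (∃ i', c i' = d i) := by rintro ⟨i', hi'⟩; exact hdc i i' hi'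
    simp only [hj, if_neg (hda i), if_neg (hdb i), dif_neg hnc, dif_pos hex]
    congr 1
    exact hd hex.choose_spec
  have hj1 : ∀ x ∈ s, j x ∈ s := by
    intro x hx
    rw [mem_s] at hx
    rw [mem_s]
    rcases hx with rfl | rfl | ⟨i, rfl⟩ | ⟨i, rfl⟩
    · rw [hja]; tauto
    · rw [hjb]; tauto
    · rw [hjc]; right; right; right; exact ⟨i, rfl⟩
    · rw [hjd]; right; right; left; exact ⟨i, rfl⟩
  have hj2 : ∀ x ∈ s, j (j x) = x := by
    intro x hx
    rw [mem_s] at hx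
    rcases hx with rfl | rfl | ⟨i, rfl⟩ | ⟨i, rfl⟩
    · rw [hja, hjb]
    · rw [hjb, hja]
    · rw [hjc, hjd]
    · rw [hjd, hjc]
  have hj3 : ∀ x ∈ s, j x ≠ x := by
    intro x hx
    rw [mem_s] at hx
    rcases hx with rfl | rfl | ⟨i, rfl⟩ | ⟨i, rfl⟩
    · rw [hja]; exact hba
    · rw [hjb]; exact fun h => hba h.symm
    · rw [hjc]; exact fun h => hdc i i h.symm
    · rw [hjd]; exact hdc i i
  -- PExt ≃ extensions of the partial matching j on s
  have e3 : PExt n m ⟨⟨⟨a, b⟩, c, d⟩, hab, hc, hd, hcd⟩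
      ≃ {F : MatchingT (Fin (2*n)) // ∀ x ∈ s, F.1 x = j x} :=
    { toFun := fun f =>
        have hfa : f.1 a = b := f.2.2.2.1
        have hfc : ∀ i, f.1 (c i) = d i := f.2.2.2.2
        have hff : ∀ x, f.1 (f.1 x) = x := f.2.1
        ⟨⟨f.1, f.2.1, f.2.2.1⟩, by
        intro x hx
        rw [mem_s] at hx
        show f.1 x = j x
        rcases hx with rfl | rfl | ⟨i, rfl⟩ | ⟨i, rfl⟩
        · rw [hja]; exact hfa
        · rw [hjb]
          have h5 := hff a
          rw [hfa] at h5
          exact h5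
        · rw [hjc]; exact hfc i
        · rw [hjd]
          have h5 := hff (c i)
          rw [hfc i] at h5
          exact h5⟩
      invFun := fun F => ⟨F.1.1, F.1.2.1, F.1.2.2,
        (F.2 a (by rw [mem_s]; tauto)).trans hja,
        fun i => (F.2 (c i) (by rw [mem_s]; right; right; left; exact ⟨i, rfl⟩)).trans (hjc i)⟩
      left_inv := fun f => rfl
      right_inv := fun F => rfl }
  rw [@Fintype.card_congr _ _ (instFintypePExt n m _) _ (e3.trans (restrictEquiv s j hj1 hj2 hj3))]
  -- cardinality of the complement
  have hm_le : m + 1 ≤ n := by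
    have h1 : m ≤ (a : ℕ) := by
      have := Fintype.card_le_of_embedding
        ⟨fun i => (⟨c i, (hcd i).1⟩ : {x : Fin (2*n) // x < a}),
         fun i j h => hc (congrArg Subtype.val h)⟩
      rwa [Fintype.card_fin, cardIio] at this
    have h2 : m ≤ 2*n - 1 - (b : ℕ) := by
      have := Fintype.card_le_of_embedding
        ⟨fun i => (⟨d i, (hcd i).2⟩ : {x : Fin (2*n) // b < x}),
         fun i j h => hd (congrArg Subtype.val h)⟩
      rwa [Fintype.card_fin, cardIoi] at this
    have h3 : (a : ℕ) < (b : ℕ) := hab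
    have h4 : (b : ℕ) < 2*n := b.2
    omega
  have hcards : s.card = 2*m + 2 := by
    have d1 : Disjoint ({a, b} : Finset (Fin (2*n))) (Finset.image c Finset.univ) := by
      rw [Finset.disjoint_left]
      intro x hx hx2
      simp only [Finset.mem_insert, Finset.mem_singleton] at hx
      simp only [Finset.mem_image, Finset.mem_univ, true_and] at hx2
      obtain ⟨i, rfl⟩ := hx2
      rcases hx with h | h
      · exact hca i h
      · exact hcb i h
    have d2 : Disjoint (({a, b} : Finset (Fin (2*n))) ∪ Finset.image c Finset.univ)
        (Finset.image d Finset.univ) := by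
      rw [Finset.disjoint_left]
      intro x hx hx2
      simp only [Finset.mem_image, Finset.mem_univ, true_and] at hx2
      obtain ⟨i, rfl⟩ := hx2
      simp only [Finset.mem_union, Finset.mem_insert, Finset.mem_singleton,
        Finset.mem_image, Finset.mem_univ, true_and] at hx
      rcases hx with (h | h) | ⟨i', h⟩
      · exact hda i h
      · exact hdb i h
      · exact hdc i i' h
    rw [hs, Finset.card_union_of_disjoint d2, Finset.card_union_of_disjoint d1,
      Finset.card_image_of_injective _ hc, Finset.card_image_of_injective _ hd,
      Finset.card_insert_of_notMem (Finset.notMem_singleton.mpr (Ne.symm hba)), Finset.card_singleton,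
      Finset.card_univ, Fintype.card_fin]
    ring
  have hcompl : Fintype.card {x : Fin (2*n) // x ∉ s} = 2*(n - m - 1) := by
    have h5 := Fintype.card_subtype_compl (fun x => x ∈ s) (α := Fin (2*n))
    rw [Fintype.card_coe, hcards, Fintype.card_fin] at h5
    rw [h5]
    omega
  exact card_matchingT (n - m - 1) _ hcompl

theorem ccLt (n : ℕ) (D : MarkedDiagram n) : D.containingCount < n := by
  classical
  have hf2 : ∀ x, D.f (D.f x) = x := D.2.1
  have hfne : ∀ x, D.f x ≠ x := D.2.2.1
  set t := Finset.univ.filter (fun c : Fin (2*n) => c < D.f c) with ht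
  have hcard_t : t.card = n := by
    have hbij : t.card = (Finset.univ.filter (fun c : Fin (2*n) => ¬ c < D.f c)).card := by
      apply Finset.card_nbij (fun x => D.f x)
      · intro x hx
        simp only [ht, Finset.mem_coe, Finset.mem_filter, Finset.mem_univ, true_and] at hx ⊢
        rw [hf2 x]
        exact not_lt_of_gt hx
      · intro x hx y hy hxy
        have h6 := congrArg D.f hxy
        rwa [hf2, hf2] at h6
      · intro y hy
        simp only [ht, Finset.coe_filter, Finset.mem_univ, true_and, Set.mem_image,
          Set.mem_setOf_eq] at hy ⊢
        refine ⟨D.f y, ?_, hf2 y⟩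
        rw [hf2 y]
        rcases lt_or_gt_of_ne (hfne y) with h | h
        · exact h
        · exact absurd h hy
    have hsplit : t.card + (Finset.univ.filter (fun c : Fin (2*n) => ¬ c < D.f c)).card
        = 2*n := by
      rw [ht, Finset.card_filter_add_card_filter_not, Finset.card_univ, Fintype.card_fin]
    rw [← hbij] at hsplit
    omega
  have hss : Finset.univ.filter
      (fun c : Fin (2*n) => c < D.f c ∧ c < D.a ∧ D.b < D.f c) ⊂ t := by
    constructor
    · intro x hx
      simp only [Finset.mem_filter, Finset.mem_univ, true_and] at hx
      simp only [ht, Finset.mem_filter, Finset.mem_univ, true_and]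
      exact hx.1
    · intro hsub
      have hmem : D.a ∈ t := by
        simp only [ht, Finset.mem_filter, Finset.mem_univ, true_and]
        exact D.2.2.2
      have := hsub hmem
      simp only [Finset.mem_filter, Finset.mem_univ, true_and] at this
      exact lt_irrefl _ this.2.1
  calc D.containingCount = (Finset.univ.filter
      (fun c : Fin (2*n) => c < D.f c ∧ c < D.a ∧ D.b < D.f c)).card := rfl
    _ < t.card := Finset.card_lt_card hss
    _ = n := hcard_t

theorem sumDF (n m : ℕ) :
    ∑ D : MarkedDiagram n, (D.containingCount).descFactorial m
      = (m.factorial)^2 * ((2*n).choose (2*m+2)) * Nat.doubleFactorial (2*(n-m-1) - 1) := by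
  classical
  have h1 : ∀ D : MarkedDiagram n, (D.containingCount).descFactorial m
      = Fintype.card (Fin m ↪ {c : Fin (2*n) // c < D.f c ∧ c < D.a ∧ D.b < D.f c}) := by
    intro D
    rw [Fintype.card_embedding_eq, Fintype.card_fin, Fintype.card_subtype]
    rfl
  rw [Finset.sum_congr rfl (fun D _ => h1 D), ← Fintype.card_sigma,
    Fintype.card_congr (E1 n m), Fintype.card_sigma,
    Finset.sum_congr rfl (fun w _ => cardPExt n m w),
    Finset.sum_const, Finset.card_univ, smul_eq_mul, cardPattern]

theorem master_s15 (n m : ℕ) (hn : 1 ≤ n) :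
    (∑ p ∈ Finset.range n, p.descFactorial m * Gcount n p)
      * ((m+1) * Nat.doubleFactorial (2*m+1))
    = n * Nat.doubleFactorial (2*n-1) * (n-1).descFactorial m * m.factorial := by
  classical
  have h1 : ∑ p ∈ Finset.range n, p.descFactorial m * Gcount n p
      = ∑ D : MarkedDiagram n, (D.containingCount).descFactorial m := by
    rw [← Finset.sum_fiberwise_of_maps_to
      (fun D _ => Finset.mem_range.mpr (ccLt n D))
      (fun D => (D.containingCount).descFactorial m)]
    apply Finset.sum_congr rfl
    intro p _
    rw [Gcount, Fintype.card_subtype]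
    rw [Finset.sum_congr rfl (fun D hD => by rw [(Finset.mem_filter.mp hD).2])]
    rw [Finset.sum_const, smul_eq_mul, mul_comm]
  rw [h1, sumDF]
  exact arith n m hn

end Diagrams

theorem G_factorial_moment (n : ℕ) (hn : 1 ≤ n) :
    (∀ m : ℕ, m ≤ n - 1 →
      ∑ p ∈ Finset.range n, (Nat.descFactorial p m : ℝ) *
          ((Gcount n p : ℝ) / (n * Nat.doubleFactorial (2*n - 1))) =
        (Nat.descFactorial (n-1) m : ℝ) * (Nat.factorial m : ℝ) /
          (((m:ℝ)+1) * (Nat.doubleFactorial (2*m+1) : ℝ))) ∧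
    (∑ p ∈ Finset.range n, (p : ℝ) *
        ((Gcount n p : ℝ) / (n * Nat.doubleFactorial (2*n - 1))) = ((n:ℝ) - 1) / 6) ∧
    (∑ p ∈ Finset.range n, ((p : ℝ) - ((n:ℝ) - 1) / 6)^2 *
        ((Gcount n p : ℝ) / (n * Nat.doubleFactorial (2*n - 1))) =
      ((n:ℝ) - 1) * (3*(n:ℝ) + 19) / 180) := by
  have hn0 : (0:ℝ) < (n:ℝ) := by exact_mod_cast hn
  have hdfp : (0:ℝ) < (Nat.doubleFactorial (2*n-1) : ℝ) := by
    exact_mod_cast Nat.doubleFactorial_pos _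
  have hTot : (0:ℝ) < (n:ℝ) * (Nat.doubleFactorial (2*n-1) : ℝ) := mul_pos hn0 hdfp
  have key : ∀ m : ℕ,
      ∑ p ∈ Finset.range n, (Nat.descFactorial p m : ℝ) *
          ((Gcount n p : ℝ) / (n * Nat.doubleFactorial (2*n - 1))) =
        (Nat.descFactorial (n-1) m : ℝ) * (Nat.factorial m : ℝ) /
          (((m:ℝ)+1) * (Nat.doubleFactorial (2*m+1) : ℝ)) := by
    intro m
    have hden : (0:ℝ) < ((m:ℝ)+1) * (Nat.doubleFactorial (2*m+1) : ℝ) := by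
      have : (0:ℝ) < (Nat.doubleFactorial (2*m+1) : ℝ) := by
        exact_mod_cast Nat.doubleFactorial_pos _
      positivity
    have hMr : (∑ p ∈ Finset.range n, (Nat.descFactorial p m : ℝ) * (Gcount n p : ℝ))
        * (((m:ℝ)+1) * (Nat.doubleFactorial (2*m+1) : ℝ))
        = (n:ℝ) * (Nat.doubleFactorial (2*n-1) : ℝ)
          * (Nat.descFactorial (n-1) m : ℝ) * (Nat.factorial m : ℝ) := by
      have := congrArg (Nat.cast : ℕ → ℝ) (master_s15 n m hn)
      push_cast at this
      linear_combination this
    simp only [← mul_div_assoc]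
    rw [← Finset.sum_div]
    rw [div_eq_div_iff (ne_of_gt hTot) (ne_of_gt hden)]
    linear_combination hMr
  have hmean : ∑ p ∈ Finset.range n, (p : ℝ) *
      ((Gcount n p : ℝ) / (n * Nat.doubleFactorial (2*n - 1))) = ((n:ℝ) - 1) / 6 := by
    have h1 := key 1
    simp only [Nat.descFactorial_one] at h1
    rw [h1]
    rw [Nat.cast_sub hn]
    have h2 : Nat.doubleFactorial (2*1+1) = 3 := rfl
    rw [h2]
    norm_num [Nat.factorial]
  refine ⟨fun m _ => key m, hmean, ?_⟩
  -- variance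
  have h0 : ∑ p ∈ Finset.range n, ((Gcount n p : ℝ) / (n * Nat.doubleFactorial (2*n - 1))) = 1 := by
    have h1 := key 0
    simp only [Nat.descFactorial_zero, Nat.cast_one, one_mul] at h1
    rw [h1]
    norm_num [Nat.factorial, Nat.doubleFactorial]
  have h2 : ∑ p ∈ Finset.range n, (Nat.descFactorial p 2 : ℝ) *
      ((Gcount n p : ℝ) / (n * Nat.doubleFactorial (2*n - 1)))
      = ((n:ℝ) - 1) * ((n:ℝ) - 2) * 2 / 45 := by
    have h1 := key 2
    rw [h1]
    have h3 : Nat.doubleFactorial (2*2+1) = 15 := rfl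
    have h4 : (Nat.descFactorial (n-1) 2 : ℝ) = ((n:ℝ) - 1) * ((n:ℝ) - 2) := by
      rcases Nat.lt_or_ge n 2 with h | h
      · have hn1 : n = 1 := by omega
        subst hn1
        norm_num [Nat.descFactorial]
      · have e : (n-1).descFactorial 2 = (n-1-1) * ((n-1).descFactorial 1) :=
          Nat.descFactorial_succ _ _
        rw [Nat.descFactorial_one] at e
        rw [e]
        have h1 : n - 1 - 1 = n - 2 := by omega
        rw [h1]
        push_cast [Nat.cast_sub (by omega : 1 ≤ n), Nat.cast_sub (by omega : 2 ≤ n)]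
        ring
    rw [h3, h4]
    norm_num [Nat.factorial]
  have hp2 : ∀ p : ℕ, (Nat.descFactorial p 2 : ℝ) = (p:ℝ)^2 - (p:ℝ) := by
    intro p
    cases p with
    | zero => norm_num
    | succ q =>
      have e : (q+1).descFactorial 2 = (q+1-1) * ((q+1).descFactorial 1) :=
        Nat.descFactorial_succ _ _
      rw [Nat.descFactorial_one, Nat.succ_sub_one] at e
      rw [e]
      push_cast
      ring
  set μ : ℝ := ((n:ℝ) - 1) / 6 with hμ
  have expand : ∑ p ∈ Finset.range n, ((p : ℝ) - μ)^2 *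
      ((Gcount n p : ℝ) / (n * Nat.doubleFactorial (2*n - 1)))
      = (∑ p ∈ Finset.range n, (Nat.descFactorial p 2 : ℝ) *
          ((Gcount n p : ℝ) / (n * Nat.doubleFactorial (2*n - 1))))
        + (1 - 2*μ) * (∑ p ∈ Finset.range n, (p : ℝ) *
          ((Gcount n p : ℝ) / (n * Nat.doubleFactorial (2*n - 1))))
        + μ^2 * (∑ p ∈ Finset.range n,
          ((Gcount n p : ℝ) / (n * Nat.doubleFactorial (2*n - 1)))) := by
    rw [Finset.mul_sum, Finset.mul_sum, ← Finset.sum_add_distrib, ← Finset.sum_add_distrib]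
    apply Finset.sum_congr rfl
    intro p _
    rw [hp2 p]
    ring
  rw [expand, h2, hmean, h0]
  rw [hμ]
  field_simp
  ring
end

section
/- Let 𝒳(x) = π/2 for 0 ≤ x < 1/2 and 𝒳(x) = π/2 - 2·arctan(√(2x-1)) for 1/2 ≤ x ≤ 1. Then 𝒳 is a probability density on [0,1], its moments satisfy ∫₀¹ x^m·𝒳(x) dx = (1/(m+1))·∫_{1/2}^1 x^m/√(2x-1) dx for all m ≥ 0, and ∫₀^{1/2} 𝒳(x) dx = π/4. -/
open scoped BigOperators

/-- The asymptotic density of the fraction of excluded chords. -/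
noncomputable def Xdist (x : ℝ) : ℝ :=
  if x < 1/2 then Real.pi / 2 else Real.pi / 2 - 2 * Real.arctan (Real.sqrt (2*x - 1))

open Real MeasureTheory Set intervalIntegral

lemma Xdist_eq_right {x : ℝ} (hx : 1/2 ≤ x) :
    Xdist x = π/2 - 2 * arctan (√(2*x-1)) := if_neg (not_lt.2 hx)

lemma Xdist_eq_left {x : ℝ} (hx : x ≤ 1/2) : Xdist x = π/2 := by
  rcases lt_or_eq_of_le hx with h | h
  · exact if_pos h
  · rw [Xdist_eq_right h.ge, h]
    norm_num

lemma hasDerivAt_sqrt2x {x : ℝ} (hx : 1/2 < x) :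
    HasDerivAt (fun y : ℝ => √(2*y-1)) (1 / √(2*x-1)) x := by
  have h0 : (2*x-1 : ℝ) ≠ 0 := by linarith
  have hs : (0:ℝ) < √(2*x-1) := Real.sqrt_pos.mpr (by linarith)
  have h1 : HasDerivAt (fun y : ℝ => 2*y-1) 2 x := by
    simpa using ((hasDerivAt_id x).const_mul (2:ℝ)).sub_const 1
  have h2 := (Real.hasDerivAt_sqrt h0).comp x h1
  refine h2.congr_deriv ?_
  field_simp

lemma hasDerivAt_u {x : ℝ} (hx : 1/2 < x) :
    HasDerivAt (fun y : ℝ => π/2 - 2 * arctan (√(2*y-1)))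
      (-(1 / (x * √(2*x-1)))) x := by
  have hs : (0:ℝ) < √(2*x-1) := Real.sqrt_pos.mpr (by linarith)
  have hxpos : (0:ℝ) < x := by linarith
  have h1 := (Real.hasDerivAt_arctan (√(2*x-1))).comp x (hasDerivAt_sqrt2x hx)
  have h2 := (h1.const_mul (2:ℝ)).const_sub (π/2)
  refine h2.congr_deriv ?_
  have hsq : (√(2*x-1)) ^ 2 = 2*x-1 := Real.sq_sqrt (by linarith)
  rw [hsq]
  field_simp
  ring

lemma continuous_aux : Continuous (fun x : ℝ => π/2 - 2 * arctan (√(2*x-1))) :=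
  continuous_const.sub (continuous_const.mul (Real.continuous_arctan.comp
    (Real.continuous_sqrt.comp (by continuity))))

lemma continuous_Xdist : Continuous Xdist := by
  have h : Xdist = fun x : ℝ =>
      if 1/2 ≤ x then π/2 - 2 * arctan (√(2*x-1)) else π/2 := by
    funext x
    rcases lt_or_ge x (1/2) with h | h
    · rw [Xdist_eq_left h.le, if_neg (not_le.2 h)]
    · rw [Xdist_eq_right h, if_pos h]
  rw [h]
  apply Continuous.if_le continuous_aux continuous_const continuous_const continuous_id
  intro x hx
  simp only [id_eq] at hx
  rw [← hx]
  have h0 : (2*(1/2:ℝ)-1) = 0 := by norm_num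
  rw [h0, Real.sqrt_zero, Real.arctan_zero]
  ring

lemma integrable_inv_sqrt :
    IntervalIntegrable (fun x : ℝ => 1 / √(2*x-1)) volume (1/2) 1 := by
  have h0 : IntervalIntegrable (fun x : ℝ => x ^ (-(1/2) : ℝ)) volume 0 1 :=
    intervalIntegrable_rpow' (by norm_num)
  have h1 := h0.comp_mul_left (c := 2) (by simp) (by simp)
  have h2 := h1.comp_sub_right (1/2)
  norm_num at h2
  have heq : (fun x : ℝ => (2 * (x - 1/2)) ^ (-(1/2) : ℝ))
      = fun x : ℝ => (2*x-1) ^ (-(1/2) : ℝ) := by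
    funext x; congr 1; ring
  rw [heq] at h2
  rw [intervalIntegrable_iff_integrableOn_Ioc_of_le (by norm_num)] at h2 ⊢
  refine h2.congr_fun (fun x hx => ?_) measurableSet_Ioc
  have hpos : (0:ℝ) < 2*x-1 := by have := hx.1; simp at this; linarith
  beta_reduce
  rw [Real.rpow_neg hpos.le, ← Real.sqrt_eq_rpow, one_div]

lemma integrable_xm_inv_sqrt (m : ℕ) :
    IntervalIntegrable (fun x : ℝ => x^m / √(2*x-1)) volume (1/2) 1 := by
  have := integrable_inv_sqrt.continuousOn_mul (g := fun x : ℝ => x^m)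
    (continuous_pow m).continuousOn
  simpa [mul_one_div, div_eq_mul_inv] using this

lemma key (m : ℕ) :
    ∫ x in (1/2:ℝ)..1,
      (x^m * (π/2 - 2 * arctan (√(2*x-1))) - x^m / (((m:ℝ)+1) * √(2*x-1)))
    = -(π/2 * (1/2:ℝ)^(m+1) / ((m:ℝ)+1)) := by
  have hm : ((m:ℝ)+1) ≠ 0 := by positivity
  set F : ℝ → ℝ := fun x => x^(m+1)/((m:ℝ)+1) * (π/2 - 2 * arctan (√(2*x-1))) with hF
  have hcont : ContinuousOn F (Icc (1/2) 1) :=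
    ((continuous_pow (m+1)).div_const _).continuousOn.mul continuous_aux.continuousOn
  have hderiv : ∀ x ∈ Ioo (1/2:ℝ) 1, HasDerivAt F
      (x^m * (π/2 - 2 * arctan (√(2*x-1))) - x^m / (((m:ℝ)+1) * √(2*x-1))) x := by
    intro x hx
    have hx1 : 1/2 < x := hx.1
    have hxpos : (0:ℝ) < x := by linarith
    have hs : (0:ℝ) < √(2*x-1) := Real.sqrt_pos.mpr (by linarith)
    have h1 : HasDerivAt (fun y : ℝ => y^(m+1)/((m:ℝ)+1)) (x^m) x := by
      have := (hasDerivAt_pow (m+1) x).div_const ((m:ℝ)+1)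
      refine this.congr_deriv ?_
      push_cast
      field_simp
    have h3 := h1.mul (hasDerivAt_u hx1)
    refine h3.congr_deriv ?_
    have hpow : x^(m+1) = x^m * x := pow_succ x m
    field_simp
    ring
  have hint : IntervalIntegrable
      (fun x => x^m * (π/2 - 2 * arctan (√(2*x-1))) - x^m / (((m:ℝ)+1) * √(2*x-1)))
      volume (1/2) 1 := by
    have ha : IntervalIntegrable (fun x : ℝ => x^m * (π/2 - 2 * arctan (√(2*x-1))))
        volume (1/2) 1 := ((continuous_pow m).mul continuous_aux).intervalIntegrable _ _
    have hb := (integrable_xm_inv_sqrt m).div_const ((m:ℝ)+1)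
    have heq : (fun x : ℝ => x^m / √(2*x-1) / ((m:ℝ)+1))
        = fun x : ℝ => x^m / (((m:ℝ)+1) * √(2*x-1)) := by
      funext x; rw [div_div, mul_comm]
    rw [heq] at hb
    exact ha.sub hb
  rw [intervalIntegral.integral_eq_sub_of_hasDerivAt_of_le (by norm_num) hcont hderiv hint]
  have e1 : F 1 = 0 := by
    show (1:ℝ)^(m+1)/((m:ℝ)+1) * (π/2 - 2 * arctan (√(2*1-1))) = 0
    rw [show (2*(1:ℝ)-1) = 1 by norm_num, Real.sqrt_one, Real.arctan_one]
    ring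
  have e0 : F (1/2) = (1/2:ℝ)^(m+1)/((m:ℝ)+1) * (π/2) := by
    show (1/2:ℝ)^(m+1)/((m:ℝ)+1) * (π/2 - 2 * arctan (√(2*(1/2)-1))) = _
    rw [show (2*(1/2:ℝ)-1) = 0 by norm_num, Real.sqrt_zero, Real.arctan_zero]
    ring
  rw [e1, e0]
  ring

lemma moment_s19 (m : ℕ) : ∫ x in (0:ℝ)..1, x^m * Xdist x
    = (1 / ((m:ℝ)+1)) * ∫ x in (1/2:ℝ)..1, x^m / √(2*x - 1) := by
  have hm : ((m:ℝ)+1) ≠ 0 := by positivity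
  have hint1 : IntervalIntegrable (fun x : ℝ => x^m * Xdist x) volume 0 (1/2) :=
    ((continuous_pow m).mul continuous_Xdist).intervalIntegrable _ _
  have hint2 : IntervalIntegrable (fun x : ℝ => x^m * Xdist x) volume (1/2) 1 :=
    ((continuous_pow m).mul continuous_Xdist).intervalIntegrable _ _
  rw [← intervalIntegral.integral_add_adjacent_intervals hint1 hint2]
  have e1 : ∫ x in (0:ℝ)..(1/2), x^m * Xdist x = π/2 * ((1/2:ℝ)^(m+1) / ((m:ℝ)+1)) := by
    rw [intervalIntegral.integral_congr (g := fun x : ℝ => π/2 * x^m) ?_]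
    · rw [intervalIntegral.integral_const_mul, integral_pow]
      norm_num
    · intro x hx
      rw [Set.uIcc_of_le (by norm_num : (0:ℝ) ≤ 1/2)] at hx
      show x^m * Xdist x = π/2 * x^m
      rw [Xdist_eq_left hx.2]
      ring
  have e2 : ∫ x in (1/2:ℝ)..1, x^m * Xdist x
      = -(π/2 * (1/2:ℝ)^(m+1) / ((m:ℝ)+1))
        + (1/((m:ℝ)+1)) * ∫ x in (1/2:ℝ)..1, x^m / √(2*x-1) := by
    have hcong : ∫ x in (1/2:ℝ)..1, x^m * Xdist x
        = ∫ x in (1/2:ℝ)..1, x^m * (π/2 - 2 * arctan (√(2*x-1))) := by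
      refine intervalIntegral.integral_congr fun x hx => ?_
      rw [Set.uIcc_of_le (by norm_num : (1/2:ℝ) ≤ 1)] at hx
      show x^m * Xdist x = x^m * (π/2 - 2 * arctan (√(2*x-1)))
      rw [Xdist_eq_right hx.1]
    have ha : IntervalIntegrable (fun x : ℝ => x^m * (π/2 - 2 * arctan (√(2*x-1))))
        volume (1/2) 1 := ((continuous_pow m).mul continuous_aux).intervalIntegrable _ _
    have hb := (integrable_xm_inv_sqrt m).div_const ((m:ℝ)+1)
    have heq : (fun x : ℝ => x^m / √(2*x-1) / ((m:ℝ)+1))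
        = fun x : ℝ => x^m / (((m:ℝ)+1) * √(2*x-1)) := by
      funext x; rw [div_div, mul_comm]
    rw [heq] at hb
    have hsub := intervalIntegral.integral_sub ha hb
    rw [key m] at hsub
    have hc : ∫ x in (1/2:ℝ)..1, x^m / (((m:ℝ)+1) * √(2*x-1))
        = (1/((m:ℝ)+1)) * ∫ x in (1/2:ℝ)..1, x^m / √(2*x-1) := by
      rw [← intervalIntegral.integral_const_mul]
      refine intervalIntegral.integral_congr fun x hx => ?_
      show x^m / (((m:ℝ)+1) * √(2*x-1)) = (1/((m:ℝ)+1)) * (x^m / √(2*x-1))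
      rw [div_eq_mul_inv, div_eq_mul_inv, mul_inv]
      ring
    rw [hcong]
    linarith [hsub, hc]
  rw [e1, e2]
  ring

lemma integral_inv_sqrt : ∫ x in (1/2:ℝ)..1, 1 / √(2*x-1) = 1 := by
  have hcont : ContinuousOn (fun x : ℝ => √(2*x-1)) (Icc (1/2) 1) :=
    (Real.continuous_sqrt.comp (by continuity)).continuousOn
  have hderiv : ∀ x ∈ Ioo (1/2:ℝ) 1,
      HasDerivAt (fun y : ℝ => √(2*y-1)) (1/√(2*x-1)) x :=
    fun x hx => hasDerivAt_sqrt2x hx.1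
  rw [intervalIntegral.integral_eq_sub_of_hasDerivAt_of_le (by norm_num) hcont hderiv
    integrable_inv_sqrt]
  rw [show (2*(1:ℝ)-1) = 1 by norm_num, show (2*(1/2:ℝ)-1) = 0 by norm_num,
    Real.sqrt_one, Real.sqrt_zero]
  norm_num

theorem X_asymptotic_density :
    (∀ x ∈ Set.Icc (0:ℝ) 1, 0 ≤ Xdist x) ∧
    (∫ x in (0:ℝ)..1, Xdist x = 1) ∧
    (∀ m : ℕ, ∫ x in (0:ℝ)..1, x^m * Xdist x =
      (1 / ((m:ℝ)+1)) * ∫ x in (1/2:ℝ)..1, x^m / Real.sqrt (2*x - 1)) ∧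
    (∫ x in (0:ℝ)..(1/2), Xdist x = Real.pi / 4) := by
  refine ⟨?_, ?_, moment_s19, ?_⟩
  · intro x hx
    rcases lt_or_ge x (1/2) with h | h
    · rw [Xdist_eq_left h.le]; positivity
    · rw [Xdist_eq_right h]
      have h1 : √(2*x-1) ≤ 1 := Real.sqrt_le_one.mpr (by linarith [hx.2])
      have h2 : arctan (√(2*x-1)) ≤ arctan 1 := Real.arctan_strictMono.monotone h1
      rw [Real.arctan_one] at h2
      linarith
  · have h0 := moment_s19 0
    have hL : ∫ x in (0:ℝ)..1, x^0 * Xdist x = ∫ x in (0:ℝ)..1, Xdist x := by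
      refine intervalIntegral.integral_congr fun x hx => ?_
      show x^0 * Xdist x = Xdist x
      rw [pow_zero, one_mul]
    have hR : ∫ x in (1/2:ℝ)..1, x^0 / √(2*x-1) = ∫ x in (1/2:ℝ)..1, 1 / √(2*x-1) := by
      refine intervalIntegral.integral_congr fun x hx => ?_
      show x^0 / √(2*x-1) = 1 / √(2*x-1)
      rw [pow_zero]
    rw [hL, hR, integral_inv_sqrt] at h0
    simpa using h0
  · rw [intervalIntegral.integral_congr (g := fun _ : ℝ => π/2)
      (fun x hx => Xdist_eq_left (by
        rw [Set.uIcc_of_le (by norm_num : (0:ℝ) ≤ 1/2)] at hx; exact hx.2))]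
    rw [intervalIntegral.integral_const]
    norm_num
    ring
end
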